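/- arXiv:1107.3882 — 9 statements merged into one kernel-verified Lean document; each statement's English description precedes it below -/
import Mathlib

section
/- For any n ∈ ℕ, n ≥ 1, and any positive integers i₁,…,iₙ, one has Ω(i₁,…,iₙ) = Ω(i₁−1, i₂,…,iₙ) + Ω(i₁, i₂−1, i₃,…,iₙ) + ⋯ + Ω(i₁,…,i_{n−1}, iₙ−1), i.e., the sum over k = 1,…,n of Ω with the k-th argument decreased by 1 and all other arguments unchanged. -/
/-!
Look at the position of the maximal value `N` of `τ`. With all blocks nonempty the pattern is
`up^{i₁} down^{i₂} up^{i₃} …`, so the maximum sits at a peak, i.e. at the end of an increasing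
block. Deleting it leaves a permutation whose pattern is the old one with one letter next to the
peak erased, and the comparison of the two former neighbours of the peak decides which letter:
if they descend, the increasing block before the peak has lost a letter; if they ascend, the
decreasing block after it has. Conversely, inserting a new maximum at the matching peak is
injective, so the permutations counted by `Ω(i)` correspond to pairs `(k, σ)` with `σ` counted by
`Ω(i - e_k)`.
-/

/-- The monotonicity condition: for the list of block lengths `a`, a permutation `τ` of
`{0, …, a.sum}` must increase on the `k`-th block for even `k` (0-indexed, i.e. odd blocks
in 1-indexed counting) and decrease on the `k`-th block for odd `k`. -/
def MonotCond (a : List ℕ) (τ : Equiv.Perm (Fin (a.sum + 1))) : Prop :=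
  ∀ k, k < a.length →
    ∀ j, (a.take k).sum ≤ j → j < (a.take (k + 1)).sum →
      ∀ h : j + 1 < a.sum + 1,
        if k % 2 = 0
        then τ ⟨j, Nat.lt_of_succ_lt h⟩ < τ ⟨j + 1, h⟩
        else τ ⟨j + 1, h⟩ < τ ⟨j, Nat.lt_of_succ_lt h⟩

/-- `Omega a` is the number of permutations of `{0, …, a.sum}` with the prescribed
alternating monotonicity pattern given by the block lengths in `a`. -/
noncomputable def Omega (a : List ℕ) : ℕ :=
  Nat.card {τ : Equiv.Perm (Fin (a.sum + 1)) // MonotCond a τ}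

open Equiv

section Ascents

variable {n : ℕ}

def IsAscent (τ : Perm (Fin n)) (j : ℕ) : Prop :=
  ∃ h : j + 1 < n, τ ⟨j, by omega⟩ < τ ⟨j + 1, h⟩

lemma isAscent_iff (τ : Perm (Fin n)) {j : ℕ} (h : j + 1 < n) :
    IsAscent τ j ↔ τ ⟨j, by omega⟩ < τ ⟨j + 1, h⟩ :=
  ⟨fun ⟨_, hlt⟩ => hlt, fun hlt => ⟨h, hlt⟩⟩

lemma not_isAscent_iff (τ : Perm (Fin n)) {j : ℕ} (h : j + 1 < n) :
    ¬ IsAscent τ j ↔ τ ⟨j + 1, h⟩ < τ ⟨j, by omega⟩ := by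
  rw [isAscent_iff τ h, not_lt, le_iff_lt_or_eq, or_iff_left]
  intro heq
  simpa using τ.injective heq

def HasAscents (N : ℕ) (s : ℕ → Prop) (τ : Perm (Fin (N + 1))) : Prop :=
  ∀ j < N, IsAscent τ j ↔ s j

noncomputable def ascentCount (N : ℕ) (s : ℕ → Prop) : ℕ :=
  Nat.card {τ : Perm (Fin (N + 1)) // HasAscents N s τ}

end Ascents

section InsertMax

variable {N : ℕ}

/-- The permutation that takes the value `N` at `q` and is order-isomorphic to `σ` elsewhere. -/
def insertMax (q : Fin (N + 1)) (σ : Perm (Fin N)) : Perm (Fin (N + 1)) :=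
  ((finSuccEquiv' q).trans (optionCongr σ)).trans (finSuccEquiv' (Fin.last N)).symm

@[simp]
lemma insertMax_apply_self (q : Fin (N + 1)) (σ : Perm (Fin N)) :
    insertMax q σ q = Fin.last N := by
  simp [insertMax, finSuccEquiv'_at, finSuccEquiv'_symm_none]

@[simp]
lemma insertMax_apply_succAbove (q : Fin (N + 1)) (σ : Perm (Fin N)) (j : Fin N) :
    insertMax q σ (q.succAbove j) = (σ j).castSucc := by
  simp [insertMax, finSuccEquiv'_succAbove, finSuccEquiv'_symm_some]

lemma insertMax_apply_of_lt (q : Fin (N + 1)) (σ : Perm (Fin N)) {x : ℕ} (hx : x < q)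
    (hxN : x < N) : insertMax q σ ⟨x, by omega⟩ = (σ ⟨x, hxN⟩).castSucc := by
  rw [← insertMax_apply_succAbove q σ, Fin.succAbove_of_castSucc_lt _ _ (by simpa [Fin.lt_def])]
  rfl

lemma insertMax_apply_of_gt (q : Fin (N + 1)) (σ : Perm (Fin N)) {x : ℕ} (hx : q < x)
    (hxN : x < N + 1) : insertMax q σ ⟨x, hxN⟩ = (σ ⟨x - 1, by omega⟩).castSucc := by
  rw [← insertMax_apply_succAbove q σ,
    Fin.succAbove_of_le_castSucc _ _ (by simp [Fin.le_def]; omega)]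
  congr 2
  omega

lemma insertMax_injective :
    Function.Injective fun p : Fin (N + 1) × Perm (Fin N) => insertMax p.1 p.2 := by
  rintro ⟨q, σ⟩ ⟨q', σ'⟩ h
  dsimp only at h
  have hq : q = q' := by
    apply (insertMax q σ).injective
    rw [insertMax_apply_self, h, insertMax_apply_self]
  subst hq
  refine Prod.ext rfl (Equiv.ext fun j => Fin.castSucc_injective _ ?_)
  rw [← insertMax_apply_succAbove, ← insertMax_apply_succAbove, h]

noncomputable def insertMaxEquiv : Fin (N + 1) × Perm (Fin N) ≃ Perm (Fin (N + 1)) :=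
  Equiv.ofBijective _ <| (Fintype.bijective_iff_injective_and_card _).mpr
    ⟨insertMax_injective, by simp [Fintype.card_perm, Nat.factorial_succ]⟩

variable (q : Fin (N + 1)) (σ : Perm (Fin N)) {j : ℕ}

lemma isAscent_insertMax_of_succ_lt (h : j + 1 < q) :
    IsAscent (insertMax q σ) j ↔ IsAscent σ j := by
  have hj : j + 1 < N := by omega
  rw [isAscent_iff _ (by omega), isAscent_iff _ hj,
    insertMax_apply_of_lt q σ (by omega) (by omega), insertMax_apply_of_lt q σ h hj,
    Fin.castSucc_lt_castSucc_iff]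

lemma isAscent_insertMax_of_succ_eq (h : j + 1 = q) : IsAscent (insertMax q σ) j := by
  refine (isAscent_iff _ (by omega)).mpr ?_
  rw [show (⟨j + 1, _⟩ : Fin (N + 1)) = q from Fin.ext h, insertMax_apply_self,
    insertMax_apply_of_lt q σ (by omega) (by omega)]
  exact Fin.castSucc_lt_last _

lemma not_isAscent_insertMax_self : ¬ IsAscent (insertMax q σ) q := by
  rintro ⟨h, hlt⟩
  rw [Fin.eta, insertMax_apply_self] at hlt
  exact (Fin.le_last _).not_gt hlt

lemma isAscent_insertMax_succ_of_le (h : q ≤ j) :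
    IsAscent (insertMax q σ) (j + 1) ↔ IsAscent σ j := by
  constructor
  · rintro ⟨hj, hlt⟩
    rw [insertMax_apply_of_gt q σ (by omega) _, insertMax_apply_of_gt q σ (by omega) _,
      Fin.castSucc_lt_castSucc_iff] at hlt
    exact ⟨by omega, by simpa using hlt⟩
  · rintro ⟨hj, hlt⟩
    refine ⟨by omega, ?_⟩
    rw [insertMax_apply_of_gt q σ (by omega) _, insertMax_apply_of_gt q σ (by omega) _,
      Fin.castSucc_lt_castSucc_iff]
    simpa using hlt

end InsertMax

section Peaks

def IsPeak (N : ℕ) (s : ℕ → Prop) (q : ℕ) : Prop :=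
  (0 < q → s (q - 1)) ∧ (q < N → ¬ s q)

/-- The `ℕ`-analogue of `Fin.succAbove`: `s ∘ succAboveNat r` is the pattern `s` with its
`r`-th letter erased. -/
def succAboveNat (r j : ℕ) : ℕ := if j < r then j else j + 1

variable {N : ℕ}

lemma hasAscents_insertMax_iff (s : ℕ → Prop) (q : Fin (N + 2)) (σ : Perm (Fin (N + 1))) :
    HasAscents (N + 1) s (insertMax q σ) ↔
      IsPeak (N + 1) s q ∧
        ∀ j < N, j + 1 ≠ q → (IsAscent σ j ↔ s (succAboveNat q j)) := by
  constructor
  · intro h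
    refine ⟨⟨fun hq =>
      (h (q - 1) (by omega)).mp (isAscent_insertMax_of_succ_eq q σ (by omega)),
      fun hq hs => not_isAscent_insertMax_self q σ ((h q hq).mpr hs)⟩, fun j hj hne => ?_⟩
    unfold succAboveNat
    split_ifs with hjq
    · rw [← isAscent_insertMax_of_succ_lt q σ (by omega)]
      exact h j (by omega)
    · rw [← isAscent_insertMax_succ_of_le q σ (by omega)]
      exact h (j + 1) (by omega)
  · rintro ⟨⟨hin, hout⟩, h⟩ j hj
    rcases lt_trichotomy (j + 1) q with hlt | heq | hgt
    · rw [isAscent_insertMax_of_succ_lt q σ hlt, h j (by omega) hlt.ne, succAboveNat,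
        if_pos (by omega)]
    · rw [show j = q - 1 by omega]
      exact iff_of_true (isAscent_insertMax_of_succ_eq q σ (by omega)) (hin (by omega))
    · rcases (show j = q ∨ q < j by omega) with hjq | hqj
      · rw [hjq]
        exact iff_of_false (not_isAscent_insertMax_self q σ) (hout (by omega))
      · obtain ⟨j, rfl⟩ : ∃ i, j = i + 1 := ⟨j - 1, by omega⟩
        rw [isAscent_insertMax_succ_of_le q σ (by omega), h j (by omega) (by omega), succAboveNat,
          if_neg (by omega)]

lemma hasAscents_eraseDescent_iff (s : ℕ → Prop) (q : Fin (N + 2)) (σ : Perm (Fin (N + 1)))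
    (hq0 : 0 < (q : ℕ)) (hqN : (q : ℕ) < N + 1) (hpeak : IsPeak (N + 1) s q) :
    HasAscents N (fun j => s (succAboveNat q j)) σ ↔
      HasAscents (N + 1) s (insertMax q σ) ∧ IsAscent σ (q - 1) := by
  have hjunction : succAboveNat q (q - 1) = q - 1 := if_pos (by omega)
  rw [hasAscents_insertMax_iff]
  constructor
  · intro h
    exact ⟨⟨hpeak, fun j hj _ => h j hj⟩,
      (h (q - 1) (by omega)).mpr (by beta_reduce; rw [hjunction]; exact hpeak.1 hq0)⟩
  · rintro ⟨⟨-, h⟩, hasc⟩ j hj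
    by_cases hjq : j + 1 = q
    · obtain rfl : j = q - 1 := by omega
      beta_reduce
      rw [hjunction]
      exact iff_of_true hasc (hpeak.1 hq0)
    · exact h j hj hjq

lemma hasAscents_eraseAscent_iff (s : ℕ → Prop) (q : Fin (N + 2)) (σ : Perm (Fin (N + 1)))
    (hq0 : 0 < (q : ℕ)) (hpeak : IsPeak (N + 1) s q) :
    HasAscents N (fun j => s (succAboveNat (q - 1) j)) σ ↔
      HasAscents (N + 1) s (insertMax q σ) ∧ ((q : ℕ) < N + 1 → ¬ IsAscent σ (q - 1)) := by
  have hjunction : succAboveNat (q - 1) (q - 1) = q := by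
    rw [succAboveNat, if_neg (lt_irrefl _)]
    omega
  have hsame : ∀ j : ℕ, j + 1 ≠ q → succAboveNat (q - 1) j = succAboveNat q j := by
    intro j hj
    unfold succAboveNat
    split_ifs <;> omega
  rw [hasAscents_insertMax_iff]
  constructor
  · intro h
    refine ⟨⟨hpeak, fun j hj hne => ?_⟩, fun hqN hasc => hpeak.2 hqN ?_⟩
    · rw [← hsame j hne]
      exact h j hj
    · rw [← hjunction]
      exact (h (q - 1) (by omega)).mp hasc
  · rintro ⟨⟨-, h⟩, hdesc⟩ j hj
    by_cases hjq : j + 1 = q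
    · obtain rfl : j = q - 1 := by omega
      beta_reduce
      rw [hjunction]
      exact iff_of_false (hdesc (by omega)) (hpeak.2 (by omega))
    · beta_reduce
      rw [hsame j hjq]
      exact h j hj hjq

end Peaks

section Blocks

variable {S : ℕ → ℕ}

def InEvenBlock (S : ℕ → ℕ) (j : ℕ) : Prop :=
  ∃ k, k % 2 = 0 ∧ S k ≤ j ∧ j < S (k + 1)

lemma eq_of_mem_block (hS : Monotone S) {j k k' : ℕ} (h : S k ≤ j ∧ j < S (k + 1))
    (h' : S k' ≤ j ∧ j < S (k' + 1)) : k = k' := by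
  by_contra hne
  rcases Nat.lt_or_gt_of_ne hne with hlt | hlt
  · have := hS (show k + 1 ≤ k' by omega)
    omega
  · have := hS (show k' + 1 ≤ k by omega)
    omega

lemma inEvenBlock_iff (hS : Monotone S) {j k : ℕ} (h : S k ≤ j ∧ j < S (k + 1)) :
    InEvenBlock S j ↔ k % 2 = 0 :=
  ⟨fun ⟨_, hk', h'⟩ => eq_of_mem_block hS h' h ▸ hk', fun hk => ⟨k, hk, h⟩⟩

lemma exists_mem_block {j n : ℕ} (h0 : S 0 ≤ j) (hj : j < S n) :
    ∃ k < n, S k ≤ j ∧ j < S (k + 1) := by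
  induction n with
  | zero => omega
  | succ n ih =>
    by_cases hjn : j < S n
    · obtain ⟨k, hk, hmem⟩ := ih hjn
      exact ⟨k, by omega, hmem⟩
    · exact ⟨n, by omega, by omega, hj⟩

def shrinkBlock (S : ℕ → ℕ) (k m : ℕ) : ℕ :=
  S m - if k < m then 1 else 0

lemma mem_block_shrinkBlock_iff (hS : Monotone S) {k r : ℕ} (hr : S k ≤ r ∧ r < S (k + 1))
    (j m : ℕ) :
    (shrinkBlock S k m ≤ j ∧ j < shrinkBlock S k (m + 1)) ↔
      (S m ≤ succAboveNat r j ∧ succAboveNat r j < S (m + 1)) := by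
  unfold shrinkBlock succAboveNat
  have := hS (Nat.le_succ m)
  rcases lt_trichotomy m k with hm | rfl | hm
  · have := hS (show m + 1 ≤ k by omega)
    split_ifs <;> omega
  · split_ifs <;> omega
  · have := hS (show k + 1 ≤ m by omega)
    split_ifs <;> omega

lemma inEvenBlock_shrinkBlock (hS : Monotone S) {k r : ℕ} (hr : S k ≤ r ∧ r < S (k + 1)) :
    InEvenBlock (shrinkBlock S k) = fun j => InEvenBlock S (succAboveNat r j) :=
  funext fun j => propext <|
    exists_congr fun m => and_congr_right fun _ => mem_block_shrinkBlock_iff hS hr j m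

end Blocks

section PeakPositions

variable {S : ℕ → ℕ} {n M k : ℕ}

/-- The peak `S (k + 1)` ending an even block `k` is shared with block `k + 1`: removing the
maximum from it shortens block `k` when the junction descends and block `k + 1` when it ascends. -/
def peakOf (S : ℕ → ℕ) (k : ℕ) : ℕ :=
  if k % 2 = 0 then S (k + 1) else S k

lemma peakOf_pos (hstep : ∀ m < n, S m < S (m + 1)) (hk : k < n) : 0 < peakOf S k := by
  unfold peakOf
  split_ifs with hpar
  · have := hstep k hk
    omega
  · obtain ⟨k, rfl⟩ : ∃ k', k = k' + 1 := ⟨k - 1, by omega⟩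
    have := hstep k (by omega)
    omega

lemma peakOf_le (hS : Monotone S) (hstep : ∀ m < n, S m < S (m + 1)) (hSn : S n = M + 1)
    (hk : k < n) : peakOf S k ≤ M + 1 := by
  have := hS (show k + 1 ≤ n by omega)
  have := hstep k hk
  unfold peakOf
  split_ifs <;> omega

lemma isPeak_peakOf (hS : Monotone S) (hstep : ∀ m < n, S m < S (m + 1)) (hSn : S n = M + 1)
    (hk : k < n) : IsPeak (M + 1) (InEvenBlock S) (peakOf S k) := by
  have hk1 := hstep k hk
  unfold peakOf
  split_ifs with hpar
  · refine ⟨fun _ => (inEvenBlock_iff hS (k := k) (by omega)).mpr hpar, fun hlt => ?_⟩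
    have hkn : k + 1 < n := by
      by_contra
      have := hS (show n ≤ k + 1 by omega)
      omega
    have := hstep (k + 1) hkn
    rw [inEvenBlock_iff hS (k := k + 1) (by omega)]
    omega
  · obtain ⟨k, rfl⟩ : ∃ k', k = k' + 1 := ⟨k - 1, by omega⟩
    have := hstep k (by omega)
    refine ⟨fun _ => (inEvenBlock_iff hS (k := k) (by omega)).mpr (by omega), fun _ => ?_⟩
    rw [inEvenBlock_iff hS (k := k + 1) (by omega)]
    exact hpar

lemma hasAscents_shrinkBlock_iff (hS : Monotone S) (hstep : ∀ m < n, S m < S (m + 1))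
    (hSn : S n = M + 1) (hk : k < n) (q : Fin (M + 2)) (hq : (q : ℕ) = peakOf S k)
    (σ : Perm (Fin (M + 1))) :
    HasAscents M (InEvenBlock (shrinkBlock S k)) σ ↔
      HasAscents (M + 1) (InEvenBlock S) (insertMax q σ) ∧
        ((q : ℕ) < M + 1 → (IsAscent σ (q - 1) ↔ k % 2 = 1)) := by
  have hpeak := hq ▸ isPeak_peakOf hS hstep hSn hk
  have hq0 := hq ▸ peakOf_pos hstep hk
  have hk1 := hstep k hk
  unfold peakOf at hq
  split_ifs at hq with hpar
  · rw [inEvenBlock_shrinkBlock hS (r := q - 1) (by omega),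
      hasAscents_eraseAscent_iff _ q σ hq0 hpeak]
    simp [hpar]
  · have hqM : (q : ℕ) < M + 1 := by
      have := hS (show k + 1 ≤ n by omega)
      omega
    rw [inEvenBlock_shrinkBlock hS (r := q) (by omega),
      hasAscents_eraseDescent_iff _ q σ hq0 hqM hpeak]
    simp [hqM, show k % 2 = 1 by omega]

end PeakPositions

section MaxRemoval

variable {S : ℕ → ℕ} {n M : ℕ}

lemma eq_of_peakOf_eq (hS : Monotone S) (hstep : ∀ m < n, S m < S (m + 1))
    (hSn : S n = M + 1) {k k' : ℕ} (hk : k < n) (hk' : k' < n) {σ : Perm (Fin (M + 1))}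
    (hσ : HasAscents M (InEvenBlock (shrinkBlock S k)) σ)
    (hσ' : HasAscents M (InEvenBlock (shrinkBlock S k')) σ) (h : peakOf S k = peakOf S k') :
    k = k' := by
  have hqM := peakOf_le hS hstep hSn hk
  have hjunction :=
    ((hasAscents_shrinkBlock_iff hS hstep hSn hk ⟨peakOf S k, by omega⟩ rfl σ).mp hσ).2
  have hjunction' :=
    ((hasAscents_shrinkBlock_iff hS hstep hSn hk' ⟨peakOf S k, by omega⟩ h σ).mp hσ').2
  have hpar : peakOf S k < M + 1 → (k % 2 = 1 ↔ k' % 2 = 1) := fun hlt =>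
    (hjunction hlt).symm.trans (hjunction' hlt)
  have hinj : Set.InjOn S (Set.Iic n) :=
    (strictMonoOn_Iic_of_lt_succ fun m hm => by simpa using hstep m hm).injOn
  have := hS (show k + 1 ≤ n by omega)
  have := hS (show k' + 1 ≤ n by omega)
  have := hstep k hk
  have := hstep k' hk'
  unfold peakOf at h hpar
  split_ifs at h hpar
  · have := hinj (show k + 1 ∈ Set.Iic n by simp; omega)
      (show k' + 1 ∈ Set.Iic n by simp; omega) h
    omega
  · have := hpar (by omega)
    omega
  · have := hpar (by omega)
    omega
  · exact hinj (show k ∈ Set.Iic n by simp; omega) (show k' ∈ Set.Iic n by simp; omega) h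

lemma exists_eq_of_isPeak (hS : Monotone S) (hS0 : S 0 = 0) (hstep : ∀ m < n, S m < S (m + 1))
    (hSn : S n = M + 1) {q : ℕ} (hq : q ≤ M + 1) (hpeak : IsPeak (M + 1) (InEvenBlock S) q) :
    ∃ m < n, m % 2 = 0 ∧ q = S (m + 1) := by
  have hq0 : 0 < q := by
    by_contra hq0
    have hn : 0 < n := by
      by_contra
      simp_all
    have := hstep 0 hn
    exact hpeak.2 (by omega) ((inEvenBlock_iff hS (k := 0) (by omega)).mpr rfl)
  obtain ⟨m, hm, hmem⟩ := exists_mem_block (S := S) (by omega) (show q - 1 < S n by omega)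
  have hpar := (inEvenBlock_iff hS hmem).mp (hpeak.1 hq0)
  refine ⟨m, hm, hpar, ?_⟩
  by_contra hne
  have := hS (show m + 1 ≤ n by omega)
  exact hpeak.2 (by omega) ((inEvenBlock_iff hS (k := m) (by omega)).mpr hpar)

lemma exists_eq_peakOf (hS : Monotone S) (hS0 : S 0 = 0) (hstep : ∀ m < n, S m < S (m + 1))
    (hSn : S n = M + 1) (q : Fin (M + 2)) (σ : Perm (Fin (M + 1)))
    (h : HasAscents (M + 1) (InEvenBlock S) (insertMax q σ)) :
    ∃ k < n, (q : ℕ) = peakOf S k ∧ HasAscents M (InEvenBlock (shrinkBlock S k)) σ := by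
  obtain ⟨hpeak, -⟩ := (hasAscents_insertMax_iff _ q σ).mp h
  obtain ⟨m, hm, hpar, hqm⟩ := exists_eq_of_isPeak hS hS0 hstep hSn (by omega) hpeak
  by_cases hasc : (q : ℕ) < M + 1 ∧ IsAscent σ (q - 1)
  · have hm1 : m + 1 < n := by
      by_contra
      have := hS (show n ≤ m + 1 by omega)
      omega
    have hq : (q : ℕ) = peakOf S (m + 1) := by simp [peakOf, hqm, show (m + 1) % 2 ≠ 0 by omega]
    exact ⟨m + 1, hm1, hq, (hasAscents_shrinkBlock_iff hS hstep hSn hm1 q hq σ).mpr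
      ⟨h, fun _ => iff_of_true hasc.2 (by omega)⟩⟩
  · have hq : (q : ℕ) = peakOf S m := by simp [peakOf, hqm, hpar]
    exact ⟨m, hm, hq, (hasAscents_shrinkBlock_iff hS hstep hSn hm q hq σ).mpr
      ⟨h, fun hlt => iff_of_false (fun ha => hasc ⟨hlt, ha⟩) (by omega)⟩⟩

theorem ascentCount_inEvenBlock (hS : Monotone S) (hS0 : S 0 = 0)
    (hstep : ∀ m < n, S m < S (m + 1)) (hSn : S n = M + 1) :
    ascentCount (M + 1) (InEvenBlock S) =
      ∑ k : Fin n, ascentCount M (InEvenBlock (shrinkBlock S k)) := by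
  let f :
      {p : Fin n × Perm (Fin (M + 1)) // HasAscents M (InEvenBlock (shrinkBlock S p.1)) p.2} →
      {p : Fin (M + 2) × Perm (Fin (M + 1)) //
        HasAscents (M + 1) (InEvenBlock S) (insertMax p.1 p.2)} := fun p =>
    ⟨(⟨peakOf S p.1.1, Nat.lt_succ_of_le (peakOf_le hS hstep hSn p.1.1.isLt)⟩, p.1.2),
      ((hasAscents_shrinkBlock_iff hS hstep hSn p.1.1.isLt _ rfl _).mp p.2).1⟩
  have hf : Function.Bijective f := by
    constructor
    · rintro ⟨⟨k, σ⟩, hσ⟩ ⟨⟨k', σ'⟩, hσ'⟩ h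
      simp only [f, Subtype.mk.injEq, Prod.mk.injEq, Fin.mk.injEq] at h
      obtain ⟨hq, rfl⟩ := h
      obtain rfl := Fin.ext (eq_of_peakOf_eq hS hstep hSn k.isLt k'.isLt hσ hσ' hq)
      rfl
    · rintro ⟨⟨q, σ⟩, h⟩
      obtain ⟨k, hk, hq, hσ⟩ := exists_eq_peakOf hS hS0 hstep hSn q σ h
      exact ⟨⟨(⟨k, hk⟩, σ), hσ⟩, Subtype.ext (Prod.ext (Fin.ext hq.symm) rfl)⟩
  calc ascentCount (M + 1) (InEvenBlock S)
      = Nat.card {p : Fin (M + 2) × Perm (Fin (M + 1)) //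
          HasAscents (M + 1) (InEvenBlock S) (insertMax p.1 p.2)} :=
        Nat.card_congr (insertMaxEquiv.subtypeEquiv fun _ => Iff.rfl).symm
    _ = _ := (Nat.card_eq_of_bijective f hf).symm
    _ = ∑ k : Fin n, ascentCount M (InEvenBlock (shrinkBlock S k)) := by
      rw [Nat.card_congr (Equiv.subtypeProdEquivSigmaSubtype
        fun (k : Fin n) σ => HasAscents M (InEvenBlock (shrinkBlock S k)) σ), Nat.card_sigma]
      rfl

end MaxRemoval

lemma monotCond_iff_hasAscents (a : List ℕ) (τ : Perm (Fin (a.sum + 1))) :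
    MonotCond a τ ↔ HasAscents a.sum (InEvenBlock fun m => (a.take m).sum) τ := by
  have hS : Monotone fun m => (a.take m).sum := List.monotone_sum_take a
  constructor
  · intro h j hj
    obtain ⟨k, hk, hmem⟩ :=
      exists_mem_block (S := fun m => (a.take m).sum) (by simp)
        (show j < (a.take a.length).sum by simpa)
    have hjump := h k hk j hmem.1 hmem.2 (by omega)
    rw [inEvenBlock_iff hS hmem]
    split_ifs at hjump with hpar
    · exact iff_of_true ((isAscent_iff τ _).mpr hjump) hpar
    · exact iff_of_false ((not_isAscent_iff τ _).mpr hjump) hpar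
  · intro h k _ j hj hj' hjN
    have hasc := h j (by omega)
    rw [inEvenBlock_iff hS (k := k) ⟨hj, hj'⟩] at hasc
    split_ifs with hpar
    · exact (isAscent_iff τ hjN).mp (hasc.mpr hpar)
    · exact (not_isAscent_iff τ hjN).mp (mt hasc.mp hpar)

lemma omega_eq_ascentCount (a : List ℕ) :
    Omega a = ascentCount a.sum (InEvenBlock fun m => (a.take m).sum) :=
  Nat.card_congr (Equiv.subtypeEquivRight (monotCond_iff_hasAscents a))

lemma sum_take_ofFn_update {n : ℕ} (i : Fin n → ℕ) (k : Fin n) (hk : 0 < i k) (m : ℕ) :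
    ((List.ofFn (Function.update i k (i k - 1))).take m).sum =
      shrinkBlock (fun m => ((List.ofFn i).take m).sum) k m := by
  rw [shrinkBlock, List.sum_take_ofFn, List.sum_take_ofFn]
  split_ifs with hkm
  · have hmem : k ∈ ({j | j.val < m} : Finset (Fin n)) := by simpa using hkm
    rw [Finset.sum_update_of_mem hmem, ← Finset.add_sum_erase _ _ hmem,
      Finset.sdiff_singleton_eq_erase]
    omega
  · rw [Finset.sum_update_of_notMem (by simpa using hkm)]
    simp

theorem stmt_1 (n : ℕ) (hn : 1 ≤ n) (i : Fin n → ℕ) (hi : ∀ k, 0 < i k) :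
    Omega (List.ofFn i) =
      ∑ k : Fin n, Omega (List.ofFn (Function.update i k (i k - 1))) := by
  set S : ℕ → ℕ := fun m => ((List.ofFn i).take m).sum
  have hS : Monotone S := List.monotone_sum_take _
  have hS0 : S 0 = 0 := by simp [S]
  have hstep : ∀ m < n, S m < S (m + 1) := fun m hm => by
    simp only [S, List.sum_take_succ _ _ (show m < (List.ofFn i).length by simpa)]
    simpa using hi ⟨m, hm⟩
  have hsum_eq (u : Fin n → ℕ) : (List.ofFn u).sum = ((List.ofFn u).take n).sum := by
    rw [List.take_of_length_le (by simp)]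
  obtain ⟨M, hM⟩ : ∃ M, S n = M + 1 :=
    ⟨S n - 1, by have : S 0 < S 1 := hstep 0 hn; have := hS hn; omega⟩
  rw [omega_eq_ascentCount, hsum_eq]
  change ascentCount (S n) (InEvenBlock S) = _
  rw [hM, ascentCount_inEvenBlock hS hS0 hstep hM]
  refine Finset.sum_congr rfl fun k _ => ?_
  rw [omega_eq_ascentCount, funext (sum_take_ofFn_update i k (hi k)), hsum_eq,
    sum_take_ofFn_update i k (hi k), shrinkBlock, if_pos k.isLt]
  change _ = ascentCount (S n - 1) _
  rw [hM, Nat.add_sub_cancel]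
end

section
/- For any m ∈ ℕ and any a₁,…,a_m ∈ ℕ with N := a₁+⋯+a_m, one has Ω(a₁,…,a_m) ≤ N!/(a₁!·a₂!⋯a_m!), the multinomial coefficient. -/
/-!
Removing the last block: a pattern permutation `τ` for `a ++ [b]` is determined by the
standardization of its values at the positions `0, …, a.sum` (a pattern permutation for `a`)
together with the set of its values on the last `b` positions, where `τ` is monotone. That set
lies above (resp. below) the value of `τ` at position `a.sum`, so it avoids `0` (resp. the top
value) and is one of `(a.sum + b).choose b` sets. Hence
`Ω (a ++ [b]) ≤ Ω a * (a.sum + b).choose b`, and induction on the blocks gives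
`Ω a * ∏ aᵢ! ≤ (∑ aᵢ)!`.
-/

open Finset Function Nat

namespace Tuple

variable {α : Type*} [LinearOrder α] {n : ℕ} {f g : Fin n → α}

lemma strictMono_comp_sort (hf : Injective f) : StrictMono (f ∘ sort f) :=
  (monotone_sort f).strictMono_of_injective (hf.comp (sort f).injective)

lemma lt_iff_sort_symm_lt (hf : Injective f) (i j : Fin n) :
    f i < f j ↔ (sort f).symm i < (sort f).symm j := by
  simpa using (strictMono_comp_sort hf).lt_iff_lt (a := (sort f).symm i) (b := (sort f).symm j)

lemma eq_of_sort_eq_of_range_eq (hf : Injective f) (hg : Injective g)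
    (hs : sort f = sort g) (hr : Set.range f = Set.range g) : f = g := by
  have hsorted : f ∘ sort f = g ∘ sort g := by
    rwa [← (strictMono_comp_sort hf).range_inj (strictMono_comp_sort hg), Set.range_comp,
      Set.range_comp, (sort f).range_eq_univ, (sort g).range_eq_univ, Set.image_univ,
      Set.image_univ]
  rw [← hs] at hsorted
  exact (sort f).surjective.injective_comp_right hsorted

end Tuple

namespace Equiv.Perm

variable {n b T : ℕ}

def lowPart (h : T = n + b) (τ : Perm (Fin (T + 1))) : Fin (n + 1) → Fin (T + 1) :=
  fun i => τ (Fin.castLE (by omega) i)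

def blockPart (h : T = n + b) (τ : Perm (Fin (T + 1))) : Fin (b + 1) → Fin (T + 1) :=
  fun i => τ ⟨n + i, by omega⟩

def highPart (h : T = n + b) (τ : Perm (Fin (T + 1))) : Fin b → Fin (T + 1) :=
  blockPart h τ ∘ Fin.succ

variable (h : T = n + b) (τ : Perm (Fin (T + 1)))

lemma lowPart_injective : Injective (lowPart h τ) :=
  τ.injective.comp (Fin.castLE_injective _)

lemma highPart_injective : Injective (highPart h τ) := by
  intro i j hij
  simpa [highPart, blockPart, Fin.ext_iff] using τ.injective hij

lemma range_lowPart : Set.range (lowPart h τ) = (Set.range (highPart h τ))ᶜ := by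
  ext v
  constructor
  · rintro ⟨i, rfl⟩ ⟨j, hj⟩
    have := Fin.val_eq_of_eq (τ.injective hj)
    simp at this
    omega
  · intro hv
    obtain ⟨p, rfl⟩ := τ.surjective v
    by_cases hp : p.val ≤ n
    · exact ⟨⟨p, by omega⟩, rfl⟩
    · refine absurd ⟨⟨p - n - 1, by omega⟩, ?_⟩ hv
      simp [highPart, blockPart, ← Fin.val_inj]
      omega

lemma eq_of_lowPart_eq_of_highPart_eq {τ₁ τ₂ : Perm (Fin (T + 1))}
    (hlow : lowPart h τ₁ = lowPart h τ₂) (hhigh : highPart h τ₁ = highPart h τ₂) :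
    τ₁ = τ₂ := by
  ext1 p
  by_cases hp : p.val ≤ n
  · exact congrFun hlow ⟨p, by omega⟩
  · simpa [highPart, blockPart, ← Fin.val_inj, show n + (p - n - 1 + 1) = p by omega]
      using congrFun hhigh ⟨p - n - 1, by omega⟩

lemma eq_of_sort_lowPart_eq_of_highPart_eq {τ₁ τ₂ : Perm (Fin (T + 1))}
    (hlow : Tuple.sort (lowPart h τ₁) = Tuple.sort (lowPart h τ₂))
    (hhigh : highPart h τ₁ = highPart h τ₂) : τ₁ = τ₂ :=
  eq_of_lowPart_eq_of_highPart_eq h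
    (Tuple.eq_of_sort_eq_of_range_eq (lowPart_injective h τ₁) (lowPart_injective h τ₂) hlow
      (by rw [range_lowPart, range_lowPart, hhigh]))
    hhigh

end Equiv.Perm

lemma List.sum_append_singleton {M : Type*} [AddMonoid M] (l : List M) (x : M) :
    (l ++ [x]).sum = l.sum + x := by
  simp

namespace MonotCond

open Equiv.Perm

variable {a : List ℕ} {b : ℕ} {τ σ : Equiv.Perm (Fin ((a ++ [b]).sum + 1))}

lemma blockPart_step (hτ : MonotCond (a ++ [b]) τ) (i : Fin b) :
    let f := blockPart (List.sum_append_singleton a b) τ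
    if a.length % 2 = 0 then f i.castSucc < f i.succ else f i.succ < f i.castSucc := by
  have := hτ a.length (by simp) (a.sum + i) (by simp) (by simp) (by simp)
  simpa [blockPart, Nat.add_assoc] using this

lemma strictMono_blockPart (hτ : MonotCond (a ++ [b]) τ) (he : a.length % 2 = 0) :
    StrictMono (blockPart (List.sum_append_singleton a b) τ) :=
  Fin.strictMono_iff_lt_succ.2 fun i => by simpa [he] using hτ.blockPart_step i

lemma strictAnti_blockPart (hτ : MonotCond (a ++ [b]) τ) (ho : a.length % 2 ≠ 0) :
    StrictAnti (blockPart (List.sum_append_singleton a b) τ) :=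
  Fin.strictAnti_iff_succ_lt.2 fun i => by simpa [ho] using hτ.blockPart_step i

lemma highPart_ne (hτ : MonotCond (a ++ [b]) τ) (i : Fin b) :
    highPart (List.sum_append_singleton a b) τ i ≠
      if a.length % 2 = 0 then 0 else Fin.last _ := by
  split_ifs with he
  · exact ne_of_gt ((Fin.zero_le _).trans_lt (hτ.strictMono_blockPart he (Fin.succ_pos i)))
  · exact ne_of_lt ((hτ.strictAnti_blockPart he (Fin.succ_pos i)).trans_le (Fin.le_last _))

lemma highPart_eq_of_range_eq (hτ : MonotCond (a ++ [b]) τ) (hσ : MonotCond (a ++ [b]) σ)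
    (hr : Set.range (highPart (List.sum_append_singleton a b) τ) =
      Set.range (highPart (List.sum_append_singleton a b) σ)) :
    highPart (List.sum_append_singleton a b) τ = highPart (List.sum_append_singleton a b) σ := by
  by_cases he : a.length % 2 = 0
  · exact ((hτ.strictMono_blockPart he).comp (Fin.strictMono_succ)).range_inj
      ((hσ.strictMono_blockPart he).comp (Fin.strictMono_succ)) |>.1 hr
  · exact ((hτ.strictAnti_blockPart he).comp_strictMono (Fin.strictMono_succ)).range_inj
      ((hσ.strictAnti_blockPart he).comp_strictMono (Fin.strictMono_succ)) |>.1 hr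

lemma of_append_singleton (hτ : MonotCond (a ++ [b]) τ) :
    MonotCond a (Tuple.sort (lowPart (List.sum_append_singleton a b) τ)).symm := by
  intro k hk j hj₁ hj₂ hj
  have H := hτ k (by simp; omega) j (by rwa [List.take_append_of_le_length (by omega)])
    (by rwa [List.take_append_of_le_length (by omega)]) (by simp; omega)
  simp only [← Tuple.lt_iff_sort_symm_lt (lowPart_injective _ τ)]
  exact H

end MonotCond

open Equiv.Perm in
lemma omega_append_singleton_le (a : List ℕ) (b : ℕ) :
    Omega (a ++ [b]) ≤ Omega a * (a.sum + b).choose b := by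
  have h := List.sum_append_singleton a b
  set x : Fin ((a ++ [b]).sum + 1) := if a.length % 2 = 0 then 0 else Fin.last _
  let F : {τ // MonotCond (a ++ [b]) τ} →
      {σ // MonotCond a σ} × (univ.erase x).powersetCard b := fun τ =>
    (⟨_, τ.2.of_append_singleton⟩, ⟨univ.image (highPart h τ), by
      simp [mem_powersetCard, subset_iff, card_image_of_injective _ (highPart_injective h τ.1),
        τ.2.highPart_ne, x]⟩)
  have hF : Injective F := by
    rintro ⟨τ, hτ⟩ ⟨σ, hσ⟩ hτσ
    simp only [F, Prod.mk.injEq, Subtype.mk.injEq, Equiv.symm_bijective.injective.eq_iff] at hτσ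
    refine Subtype.ext (eq_of_sort_lowPart_eq_of_highPart_eq h hτσ.1 ?_)
    refine hτ.highPart_eq_of_range_eq hσ ?_
    simpa [← coe_inj, coe_image] using hτσ.2
  calc Omega (a ++ [b]) ≤ Nat.card ({σ // MonotCond a σ} × (univ.erase x).powersetCard b) :=
        Nat.card_le_card_of_injective F hF
    _ = Omega a * (a.sum + b).choose b := by
        rw [Nat.card_prod, Nat.card_eq_finsetCard, card_powersetCard,
          card_erase_of_mem (mem_univ _), Finset.card_univ, Fintype.card_fin, h]
        rfl

lemma omega_mul_prod_factorial_le (a : List ℕ) :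
    Omega a * (a.map Nat.factorial).prod ≤ a.sum ! := by
  induction a using List.reverseRecOn with
  | nil => simpa [Omega, Fintype.card_perm] using Finite.card_subtype_le (MonotCond [])
  | append_singleton a b ih =>
    calc Omega (a ++ [b]) * ((a ++ [b]).map Nat.factorial).prod
        = Omega (a ++ [b]) * (a.map Nat.factorial).prod * b ! := by simp [mul_assoc]
      _ ≤ Omega a * (a.sum + b).choose b * (a.map Nat.factorial).prod * b ! := by
        gcongr; exact omega_append_singleton_le a b
      _ = Omega a * (a.map Nat.factorial).prod * ((a.sum + b).choose b * b !) := by ring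
      _ ≤ a.sum ! * ((a.sum + b).choose b * b !) := by gcongr
      _ = (a ++ [b]).sum ! := by
        rw [List.sum_append_singleton, ← Nat.add_choose_mul_factorial_mul_factorial]; ring

theorem stmt_2 (a : List ℕ) :
    Omega a ≤ Nat.multinomial Finset.univ a.get := by
  refine Nat.le_of_mul_le_mul_left ?_ (Nat.prod_factorial_pos univ a.get)
  rw [Nat.multinomial_spec]
  simpa [mul_comm] using omega_mul_prod_factorial_le a
end

section
/- For any n ∈ ℕ, n ≥ 1, and any real numbers x₁,…,xₙ (with no restriction on their size), the family (Ω'(i₁,…,iₙ)·x₁^{i₁}⋯xₙ^{iₙ}) indexed by (i₁,…,iₙ) ∈ ℕⁿ is absolutely summable, i.e., the series Gₙ(x₁,…,xₙ) = Σ_{i₁,…,iₙ ≥ 0} Ω'(i₁,…,iₙ) x₁^{i₁}⋯xₙ^{iₙ} converges absolutely for all values of its arguments. -/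
/-- The normalized quantity `Ω'(a) = Ω(a) / (N + 1)!` where `N = a.sum`. -/
noncomputable def Omega' (a : List ℕ) : ℝ :=
  (Omega a : ℝ) / (Nat.factorial (a.sum + 1))

/-!
A permutation with the prescribed pattern is strictly monotone on each closed block
`[s_{k-1}, s_k]`, and for `n ≥ 1` these blocks cover `{0, …, N}`. A strictly monotone map
out of a finite chain is determined by its range, so the permutation is determined by the
`n` ranges of its blocks, whence `Ω(a) ≤ 2^{(N+1)n}`. Together with
`a₁! ⋯ aₙ! ∣ N!` this gives `Ω'(a) ≤ 2ⁿ ∏ₖ (2ⁿ)^{aₖ} / aₖ!`, so the series is dominated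
termwise by the expansion of `2ⁿ exp (2ⁿ (|x₁| + ⋯ + |xₙ|))`.
-/

theorem List.sum_take_add_getElem_le (a : List ℕ) (k : ℕ) (hk : k < a.length) :
    (a.take k).sum + a[k] ≤ a.sum := by
  rw [← List.sum_take_succ a k hk]
  exact (List.take_sublist _ a).sum_le_sum fun _ _ => Nat.zero_le _

theorem List.exists_sum_take_le_le {a : List ℕ} (ha : a ≠ []) {p : ℕ} (hp : p ≤ a.sum) :
    ∃ k, ∃ hk : k < a.length, (a.take k).sum ≤ p ∧ p ≤ (a.take k).sum + a[k] := by
  induction a generalizing p with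
  | nil => exact absurd rfl ha
  | cons b l ih =>
    rw [List.sum_cons] at hp
    rcases le_or_gt p b with hpb | hpb
    · exact ⟨0, by simp, by simp, by simpa using hpb⟩
    · have hl : l ≠ [] := by rintro rfl; rw [List.sum_nil] at hp; omega
      obtain ⟨k, hk, h₁, h₂⟩ := ih hl (p := p - b) (by omega)
      refine ⟨k + 1, Nat.succ_lt_succ hk, ?_, ?_⟩ <;>
        simp only [List.take_succ_cons, List.sum_cons, List.getElem_cons_succ] <;> omega

def blockPos (a : List ℕ) (k : Fin a.length) (t : Fin (a[k] + 1)) : Fin (a.sum + 1) :=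
  ⟨(a.take k).sum + t, by
    have := a.sum_take_add_getElem_le k k.2
    have := t.2
    simp only [Fin.getElem_fin] at this
    omega⟩

theorem exists_blockPos_eq {a : List ℕ} (ha : a ≠ []) (p : Fin (a.sum + 1)) :
    ∃ k t, blockPos a k t = p := by
  obtain ⟨k, hk, h₁, h₂⟩ := List.exists_sum_take_le_le ha (Nat.le_of_lt_succ p.2)
  refine ⟨⟨k, hk⟩, ⟨p - (a.take k).sum, ?_⟩, Fin.ext ?_⟩
  · simp only [Fin.getElem_fin]; omega
  · simp only [blockPos]; omega

theorem MonotCond.lt_blockPos_succ {a : List ℕ} {τ : Equiv.Perm (Fin (a.sum + 1))}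
    (hτ : MonotCond a τ) (k : Fin a.length) (t : Fin a[k]) :
    if k.1 % 2 = 0 then τ (blockPos a k t.castSucc) < τ (blockPos a k t.succ)
    else τ (blockPos a k t.succ) < τ (blockPos a k t.castSucc) := by
  have ht := t.2
  have hle := a.sum_take_add_getElem_le k k.2
  simp only [Fin.getElem_fin] at ht
  exact hτ k k.2 ((a.take k).sum + t) (by omega) (by rw [List.sum_take_succ a k k.2]; omega)
    (by omega)

section
variable {a : List ℕ} {τ τ₁ τ₂ : Equiv.Perm (Fin (a.sum + 1))}

theorem MonotCond.strictMono_comp_blockPos (hτ : MonotCond a τ) {k : Fin a.length}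
    (hk : k.1 % 2 = 0) : StrictMono (τ ∘ blockPos a k) :=
  Fin.strictMono_iff_lt_succ.2 fun t => by simpa [hk] using hτ.lt_blockPos_succ k t

theorem MonotCond.strictAnti_comp_blockPos (hτ : MonotCond a τ) {k : Fin a.length}
    (hk : k.1 % 2 ≠ 0) : StrictAnti (τ ∘ blockPos a k) :=
  Fin.strictAnti_iff_succ_lt.2 fun t => by simpa [hk] using hτ.lt_blockPos_succ k t

theorem MonotCond.comp_blockPos_eq_of_range_eq (h₁ : MonotCond a τ₁) (h₂ : MonotCond a τ₂)
    (k : Fin a.length) (h : Set.range (τ₁ ∘ blockPos a k) = Set.range (τ₂ ∘ blockPos a k)) :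
    τ₁ ∘ blockPos a k = τ₂ ∘ blockPos a k := by
  by_cases hk : k.1 % 2 = 0
  · exact ((h₁.strictMono_comp_blockPos hk).range_inj (h₂.strictMono_comp_blockPos hk)).1 h
  · exact ((h₁.strictAnti_comp_blockPos hk).range_inj (h₂.strictAnti_comp_blockPos hk)).1 h

theorem MonotCond.eq_of_range_comp_blockPos_eq (ha : a ≠ []) (h₁ : MonotCond a τ₁)
    (h₂ : MonotCond a τ₂)
    (h : ∀ k, Set.range (τ₁ ∘ blockPos a k) = Set.range (τ₂ ∘ blockPos a k)) : τ₁ = τ₂ :=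
  Equiv.ext fun p => by
    obtain ⟨k, t, rfl⟩ := exists_blockPos_eq ha p
    exact congrFun (h₁.comp_blockPos_eq_of_range_eq h₂ k (h k)) t

end

theorem Omega_le_two_pow {a : List ℕ} (ha : a ≠ []) :
    Omega a ≤ 2 ^ ((a.sum + 1) * a.length) := by
  classical
  let blockImages (τ : {τ // MonotCond a τ}) (k : Fin a.length) : Finset (Fin (a.sum + 1)) :=
    Finset.univ.image (τ.1 ∘ blockPos a k)
  have hinj : Function.Injective blockImages := fun τ₁ τ₂ h =>
    Subtype.ext <| τ₁.2.eq_of_range_comp_blockPos_eq ha τ₂.2 fun k => by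
      simpa [blockImages, Set.image_univ, Function.comp_def] using
        Finset.coe_inj.2 (congrFun h k)
  calc Omega a ≤ Nat.card (Fin a.length → Finset (Fin (a.sum + 1))) :=
        Nat.card_le_card_of_injective _ hinj
    _ = 2 ^ ((a.sum + 1) * a.length) := by simp [Nat.card_eq_fintype_card, pow_mul]

open Finset in
theorem Omega'_ofFn_le {n : ℕ} (hn : 1 ≤ n) (i : Fin n → ℕ) :
    Omega' (List.ofFn i) ≤ 2 ^ n * ∏ k, ((2 : ℝ) ^ n) ^ i k / (i k).factorial := by
  have hne : List.ofFn i ≠ [] := by rw [Ne, List.ofFn_eq_nil_iff]; omega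
  have hfact : ∏ k, ((i k).factorial : ℝ) ≤ ((∑ k, i k) + 1).factorial := by
    exact_mod_cast (Nat.le_of_dvd (Nat.factorial_pos _)
      (Nat.prod_factorial_dvd_factorial_sum univ i)).trans (Nat.factorial_le (Nat.le_succ _))
  have hOmega : (Omega (List.ofFn i) : ℝ) ≤ 2 ^ ((∑ k, i k + 1) * n) := by
    exact_mod_cast (List.sum_ofFn (f := i) ▸ List.length_ofFn (f := i) ▸ Omega_le_two_pow hne)
  calc Omega' (List.ofFn i)
      ≤ 2 ^ ((∑ k, i k + 1) * n) / ((∑ k, i k) + 1).factorial := by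
        rw [Omega', List.sum_ofFn]; gcongr
    _ ≤ 2 ^ ((∑ k, i k + 1) * n) / ∏ k, ((i k).factorial : ℝ) := by
        gcongr
    _ = 2 ^ n * ∏ k, ((2 : ℝ) ^ n) ^ i k / (i k).factorial := by
        rw [prod_div_distrib, prod_pow_eq_pow_sum, ← pow_mul, mul_div_assoc', ← pow_add]
        ring_nf

theorem summable_fin_prod_of_nonneg {n : ℕ} {f : Fin n → ℕ → ℝ} (hf₀ : ∀ k m, 0 ≤ f k m)
    (hf : ∀ k, Summable (f k)) : Summable fun i : Fin n → ℕ => ∏ k, f k (i k) := by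
  induction n with
  | zero => exact Summable.of_finite
  | succ n ih =>
    have hprod := (hf 0).mul_of_nonneg (ih (fun k => hf₀ k.succ) fun k => hf k.succ) (hf₀ 0)
      fun i => Finset.prod_nonneg fun k _ => hf₀ k.succ (i k)
    refine (hprod.comp_injective (Fin.consEquiv fun _ => ℕ).symm.injective).congr fun i => ?_
    simp [Fin.prod_univ_succ, Fin.tail]

theorem stmt_6 (n : ℕ) (hn : 1 ≤ n) (x : Fin n → ℝ) :
    Summable (fun i : Fin n → ℕ =>
      |Omega' (List.ofFn i) * ∏ k : Fin n, x k ^ i k|) := by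
  have hmajorant : Summable fun i : Fin n → ℕ =>
      2 ^ n * ∏ k, ((2 : ℝ) ^ n * |x k|) ^ i k / (i k).factorial :=
    (summable_fin_prod_of_nonneg (fun _ _ => by positivity)
      fun k => Real.summable_pow_div_factorial _).mul_left _
  refine hmajorant.of_nonneg_of_le (fun i => abs_nonneg _) fun i => ?_
  calc |Omega' (List.ofFn i) * ∏ k, x k ^ i k| = Omega' (List.ofFn i) * ∏ k, |x k| ^ i k := by
        rw [abs_mul, abs_of_nonneg (by unfold Omega'; positivity), Finset.abs_prod]
        simp only [abs_pow]
    _ ≤ (2 ^ n * ∏ k, ((2 : ℝ) ^ n) ^ i k / (i k).factorial) * ∏ k, |x k| ^ i k := by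
        gcongr; exact Omega'_ofFn_le hn i
    _ = 2 ^ n * ∏ k, ((2 : ℝ) ^ n * |x k|) ^ i k / (i k).factorial := by
        rw [mul_assoc, ← Finset.prod_mul_distrib]
        congr 1
        refine Finset.prod_congr rfl fun k _ => ?_
        rw [mul_pow]
        ring
end

section
/- For any n ∈ ℕ, n ≥ 1, and any positive integers i₁, j₁, …, iₙ, jₙ with N := i₁ + j₁ + ⋯ + iₙ + jₙ, one has Ω'(i₁, j₁, …, iₙ, jₙ) = (1/(N+1)) · Σ_{k=1}^{n} Ω'(i₁, j₁, …, i_{k−1}, j_{k−1}, i_k − 1) · Ω'(j_k − 1, i_{k+1}, j_{k+1}, …, iₙ, jₙ), where the first factor has the 2k−1 arguments i₁, j₁, …, i_k − 1 and the second factor has the 2(n−k)+1 arguments j_k − 1, i_{k+1}, j_{k+1}, …, iₙ, jₙ. -/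
/-- The interleaved list `[i t₁, j t₁, i t₂, j t₂, …]` for the indices in `l`. -/
def pairList (i j : ℕ → ℕ) (l : List ℕ) : List ℕ :=
  (l.map fun t => [i t, j t]).flatten

/-!
Look at the position of the largest value `N` in a permutation counted by
`Ω(i₁, j₁, …, iₙ, jₙ)`. The pattern starts with an ascent and ends with a descent, so `N` sits
at one of the `n` peaks, between the blocks `i_k` and `j_k`. Removing it leaves on its left a
permutation with pattern `(i₁, j₁, …, i_k - 1)`, and on its right one with pattern
`(j_k - 1, i_{k+1}, …, jₙ)` turned upside down, while the set of values sent to the left is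
arbitrary. Standardising both sides is a bijection, so the peak at `k` contributes
`(N choose |left|) · Ω(left) · Ω(right)`; dividing by `(N + 1)!` gives the formula.
-/

open Finset
open scoped Nat

/-- One letter per step of a permutation with block lengths `a`, `true` for an ascent. -/
def ascentWord : Bool → List ℕ → List Bool
  | _, [] => []
  | b, x :: a => List.replicate x b ++ ascentWord (!b) a

@[simp] lemma ascentWord_nil (b : Bool) : ascentWord b [] = [] := rfl

@[simp] lemma ascentWord_cons (b : Bool) (x : ℕ) (a : List ℕ) :
    ascentWord b (x :: a) = List.replicate x b ++ ascentWord (!b) a := rfl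

@[simp] lemma length_ascentWord (b : Bool) (a : List ℕ) : (ascentWord b a).length = a.sum := by
  induction a generalizing b with
  | nil => rfl
  | cons x a ih => simp [ih]

lemma ascentWord_not (b : Bool) (a : List ℕ) :
    ascentWord (!b) a = (ascentWord b a).map not := by
  induction a generalizing b with
  | nil => rfl
  | cons x a ih => simp [ih, List.map_map, Function.comp_def]

lemma ascentWord_false (a : List ℕ) : ascentWord false a = (ascentWord true a).map not :=
  ascentWord_not true a

lemma getElem?_ascentWord {b : Bool} {a : List ℕ} {k m : ℕ} (hk : k < a.length)
    (hm : (a.take k).sum ≤ m) (hm' : m < (a.take (k + 1)).sum) :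
    (ascentWord b a)[m]? = some (if k % 2 = 0 then b else !b) := by
  induction a generalizing b k m with
  | nil => simp at hk
  | cons x a ih =>
    cases k with
    | zero => simp_all [List.getElem?_append_left]
    | succ k =>
      simp only [List.take_succ_cons, List.sum_cons] at hm hm'
      rw [ascentWord_cons, List.getElem?_append_right (by simp; omega), List.length_replicate,
        ih (by simpa using hk) (by omega) (by omega)]
      by_cases hpar : k % 2 = 0 <;> simp [hpar, Nat.succ_mod_two_eq_zero_iff]

lemma exists_mem_block_s7 (a : List ℕ) {m : ℕ} (hm : m < a.sum) :
    ∃ k < a.length, (a.take k).sum ≤ m ∧ m < (a.take (k + 1)).sum := by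
  induction a generalizing m with
  | nil => simp at hm
  | cons x a ih =>
    by_cases hx : m < x
    · exact ⟨0, by simp, by simp, by simpa using hx⟩
    · obtain ⟨k, hk, h, h'⟩ := ih (m := m - x) (by simp at hm; omega)
      exact ⟨k + 1, by simpa using hk, by simp; omega, by simp; omega⟩

/-- Steps beyond `w.length` are required to descend. -/
def ascentPerms (N : ℕ) (w : List Bool) : Finset (Equiv.Perm (Fin (N + 1))) :=
  {τ | ∀ m : Fin N, τ m.castSucc < τ m.succ ↔ w[(m : ℕ)]? = some true}

lemma monotCond_iff_mem_ascentPerms (a : List ℕ) (τ : Equiv.Perm (Fin (a.sum + 1))) :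
    MonotCond a τ ↔ τ ∈ ascentPerms a.sum (ascentWord true a) := by
  simp only [ascentPerms, mem_filter, mem_univ, true_and]
  constructor
  · intro H m
    obtain ⟨k, hk, hm, hm'⟩ := exists_mem_block_s7 a m.isLt
    have := H k hk m hm hm' (by simp)
    rw [getElem?_ascentWord hk hm hm']
    split_ifs at this ⊢
    · exact iff_of_true this rfl
    · exact iff_of_false (lt_asymm this) (by simp)
  · intro H k hk m hm hm' h
    have := H ⟨m, by omega⟩
    rw [getElem?_ascentWord hk hm hm'] at this
    split_ifs with hpar
    · simpa [hpar] using this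
    · refine lt_of_le_of_ne (not_lt.mp ?_) (τ.injective.ne (by simp [Fin.ext_iff]))
      simpa [hpar] using this

lemma omega_eq_card_ascentPerms (a : List ℕ) :
    Omega a = #(ascentPerms a.sum (ascentWord true a)) := by
  rw [Omega, ← Nat.card_eq_finsetCard]
  exact Nat.card_congr (Equiv.subtypeEquivRight (monotCond_iff_mem_ascentPerms a))

lemma getElem?_map_not_eq_some_true {w : List Bool} {m : ℕ} (hm : m < w.length) :
    (w.map not)[m]? = some true ↔ ¬ w[m]? = some true := by
  simp [List.getElem?_eq_getElem hm]

lemma mem_ascentPerms_map_not_iff (w : List Bool) (τ : Equiv.Perm (Fin (w.length + 1))) :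
    τ ∈ ascentPerms w.length (w.map not) ↔
      τ.trans Fin.revPerm ∈ ascentPerms w.length w := by
  simp only [ascentPerms, mem_filter, mem_univ, true_and, Equiv.trans_apply, Fin.revPerm_apply,
    Fin.rev_lt_rev]
  refine forall_congr' fun m => ?_
  have hne : τ m.succ ≠ τ m.castSucc := τ.injective.ne Fin.castSucc_lt_succ.ne'
  rw [getElem?_map_not_eq_some_true m.isLt, ← hne.le_iff_lt, ← not_lt]
  tauto

lemma card_ascentPerms_map_not {N : ℕ} {w : List Bool} (hw : w.length = N) :
    #(ascentPerms N (w.map not)) = #(ascentPerms N w) := by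
  subst hw
  have hrev (τ : Equiv.Perm (Fin (w.length + 1))) :
      (τ.trans Fin.revPerm).trans Fin.revPerm = τ := by
    ext
    simp
  refine card_nbij' (fun τ => τ.trans Fin.revPerm) (fun τ => τ.trans Fin.revPerm)
    (fun τ hτ => (mem_ascentPerms_map_not_iff w τ).1 hτ) (fun τ hτ => ?_)
    (fun τ _ => hrev τ) (fun τ _ => hrev τ)
  rw [mem_coe, mem_ascentPerms_map_not_iff, hrev]
  exact hτ

section Peak

variable {N : ℕ} {w : List Bool} {τ : Equiv.Perm (Fin (N + 1))}

lemma getElem?_eq_some_true_of_apply_succ_eq_last (hτ : τ ∈ ascentPerms N w) {m : Fin N}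
    (h : τ m.succ = Fin.last N) : w[(m : ℕ)]? = some true := by
  refine ((mem_filter.1 hτ).2 m).1 ?_
  rw [h, Fin.lt_last_iff_ne_last, ← h]
  exact τ.injective.ne Fin.castSucc_lt_succ.ne

lemma getElem?_ne_some_true_of_apply_castSucc_eq_last (hτ : τ ∈ ascentPerms N w) {m : Fin N}
    (h : τ m.castSucc = Fin.last N) : w[(m : ℕ)]? ≠ some true := by
  rw [Ne, ← (mem_filter.1 hτ).2 m, h]
  exact not_lt.2 (Fin.le_last _)

end Peak

section Rank

variable {α : Type*} [LinearOrder α] {k : ℕ} (f : Fin k → α)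

lemma card_image_univ_of_injective (hf : Function.Injective f) : #(univ.image f) = k := by
  rw [card_image_of_injective _ hf, card_univ, Fintype.card_fin]

/-- `rankPerm f hf q` is the rank of `f q` among the values of `f`. -/
noncomputable def rankPerm (hf : Function.Injective f) : Equiv.Perm (Fin k) :=
  ((Equiv.ofInjective f hf).trans (Equiv.setCongr (by simp))).trans
    ((univ.image f).orderIsoOfFin (card_image_univ_of_injective f hf)).symm.toEquiv

lemma orderEmbOfFin_rankPerm (hf : Function.Injective f) {s : Finset α} (hs : univ.image f = s)
    (h : #s = k) (q : Fin k) : s.orderEmbOfFin h (rankPerm f hf q) = f q := by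
  subst hs
  simp only [rankPerm, Equiv.trans_apply, RelIso.coe_fn_toEquiv, ← coe_orderIsoOfFin_apply,
    OrderIso.apply_symm_apply]
  rfl

lemma rankPerm_lt_rankPerm_iff (hf : Function.Injective f) {q q' : Fin k} :
    rankPerm f hf q < rankPerm f hf q' ↔ f q < f q' := by
  rw [← ((univ.image f).orderEmbOfFin (card_image_univ_of_injective f hf)).lt_iff_lt,
    orderEmbOfFin_rankPerm f hf rfl, orderEmbOfFin_rankPerm f hf rfl]

lemma rankPerm_eq (hf : Function.Injective f) {σ : Equiv.Perm (Fin k)}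
    (hσ : ∀ q q', σ q < σ q' ↔ f q < f q') : rankPerm f hf = σ := by
  have hmono : StrictMono (rankPerm f hf ∘ σ.symm) := fun x y hxy => by
    rw [Function.comp_apply, Function.comp_apply, rankPerm_lt_rankPerm_iff, ← hσ]
    simpa using hxy
  have := (hmono.range_inj strictMono_id).1 (by simp [Set.range_comp, Set.range_id])
  ext q
  simpa using congrArg Fin.val (congrFun this (σ q))

end Rank

section Glue

variable {N p r : ℕ}

def leftPart (hpr : p + 1 + r = N + 1) (τ : Equiv.Perm (Fin (N + 1))) (q : Fin p) :
    Fin (N + 1) :=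
  τ (Fin.castLE (by omega) q)

def rightPart (hpr : p + 1 + r = N + 1) (τ : Equiv.Perm (Fin (N + 1))) (q : Fin r) :
    Fin (N + 1) :=
  τ ⟨p + 1 + q, by omega⟩

lemma leftPart_injective (hpr : p + 1 + r = N + 1) (τ : Equiv.Perm (Fin (N + 1))) :
    Function.Injective (leftPart hpr τ) :=
  fun _ _ h => Fin.castLE_injective _ (τ.injective h)

lemma rightPart_injective (hpr : p + 1 + r = N + 1) (τ : Equiv.Perm (Fin (N + 1))) :
    Function.Injective (rightPart hpr τ) := fun q q' h => by
  have := congrArg Fin.val (τ.injective h)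
  simp only at this
  exact Fin.ext (by omega)

lemma eq_castLE_or_val_eq_or_eq_add (hpr : p + 1 + r = N + 1) (q : Fin (N + 1)) :
    (∃ q' : Fin p, q = Fin.castLE (by omega) q') ∨ (q : ℕ) = p ∨
      ∃ q' : Fin r, q = ⟨p + 1 + q', by omega⟩ := by
  rcases lt_trichotomy (q : ℕ) p with h | h | h
  · exact .inl ⟨⟨q, h⟩, rfl⟩
  · exact .inr (.inl h)
  · exact .inr (.inr ⟨⟨q - (p + 1), by omega⟩, Fin.ext (by simp; omega)⟩)

variable {S : Finset (Fin (N + 1))}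

lemma card_sdiff_of_mem_powersetCard (hpr : p + 1 + r = N + 1)
    (hS : S ∈ powersetCard p (univ.erase (Fin.last N))) :
    #(univ.erase (Fin.last N) \ S) = r := by
  rw [mem_powersetCard] at hS
  rw [card_sdiff_of_subset hS.1, card_erase_of_mem (mem_univ _), card_univ, Fintype.card_fin,
    hS.2]
  omega

noncomputable def glueFun (hpr : p + 1 + r = N + 1)
    (hS : S ∈ powersetCard p (univ.erase (Fin.last N)))
    (σ : Equiv.Perm (Fin p)) (ρ : Equiv.Perm (Fin r)) (q : Fin (N + 1)) : Fin (N + 1) :=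
  if h : (q : ℕ) < p then S.orderEmbOfFin (mem_powersetCard.1 hS).2 (σ ⟨q, h⟩)
  else if h' : (q : ℕ) = p then Fin.last N
  else (univ.erase (Fin.last N) \ S).orderEmbOfFin (card_sdiff_of_mem_powersetCard hpr hS)
    (ρ ⟨q - (p + 1), by omega⟩)

variable (hpr : p + 1 + r = N + 1) (hS : S ∈ powersetCard p (univ.erase (Fin.last N)))
  (σ : Equiv.Perm (Fin p)) (ρ : Equiv.Perm (Fin r))

lemma glueFun_castLE (q : Fin p) :
    glueFun hpr hS σ ρ (Fin.castLE (by omega) q) =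
      S.orderEmbOfFin (mem_powersetCard.1 hS).2 (σ q) := by
  simp [glueFun]

lemma glueFun_peak : glueFun hpr hS σ ρ ⟨p, by omega⟩ = Fin.last N := by
  simp [glueFun]

lemma glueFun_right (q : Fin r) :
    glueFun hpr hS σ ρ ⟨p + 1 + q, by omega⟩ = (univ.erase (Fin.last N) \ S).orderEmbOfFin
      (card_sdiff_of_mem_powersetCard hpr hS) (ρ q) := by
  have h : ¬ p + 1 + (q : ℕ) < p := by omega
  have h' : p + 1 + (q : ℕ) ≠ p := by omega
  simp [glueFun, h, h']

lemma glueFun_surjective : Function.Surjective (glueFun hpr hS σ ρ) := by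
  intro y
  by_cases hyS : y ∈ S
  · rw [← mem_coe, ← range_orderEmbOfFin S (mem_powersetCard.1 hS).2] at hyS
    obtain ⟨x, rfl⟩ := hyS
    exact ⟨Fin.castLE (by omega) (σ.symm x), by simp [glueFun_castLE]⟩
  by_cases hy : y = Fin.last N
  · exact ⟨_, hy ▸ glueFun_peak hpr hS σ ρ⟩
  · have hyT : y ∈ univ.erase (Fin.last N) \ S := by simp [hy, hyS]
    rw [← mem_coe, ← range_orderEmbOfFin _ (card_sdiff_of_mem_powersetCard hpr hS)] at hyT
    obtain ⟨x, rfl⟩ := hyT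
    exact ⟨⟨p + 1 + ρ.symm x, by omega⟩, by simp [glueFun_right]⟩

noncomputable def gluePerm : Equiv.Perm (Fin (N + 1)) :=
  Equiv.ofBijective _ (Finite.surjective_iff_bijective.1 (glueFun_surjective hpr hS σ ρ))

@[simp] lemma coe_gluePerm : ⇑(gluePerm hpr hS σ ρ) = glueFun hpr hS σ ρ := rfl

lemma image_leftPart_gluePerm : univ.image (leftPart hpr (gluePerm hpr hS σ ρ)) = S := by
  have hleft : leftPart hpr (gluePerm hpr hS σ ρ) = S.orderEmbOfFin _ ∘ σ :=
    funext (glueFun_castLE hpr hS σ ρ)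
  apply coe_injective
  rw [coe_image, coe_univ, Set.image_univ, hleft, EquivLike.range_comp, range_orderEmbOfFin]

lemma rankPerm_leftPart_gluePerm :
    rankPerm (leftPart hpr (gluePerm hpr hS σ ρ)) (leftPart_injective hpr _) = σ :=
  rankPerm_eq _ _ fun q q' => by simp [leftPart, glueFun_castLE]

lemma rankPerm_rightPart_gluePerm :
    rankPerm (rightPart hpr (gluePerm hpr hS σ ρ)) (rightPart_injective hpr _) = ρ :=
  rankPerm_eq _ _ fun q q' => by simp [rightPart, glueFun_right]

end Glue

section Split

variable {N p r : ℕ} (hpr : p + 1 + r = N + 1) {τ : Equiv.Perm (Fin (N + 1))}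

lemma image_leftPart_mem_powersetCard (hτ : τ ⟨p, by omega⟩ = Fin.last N) :
    univ.image (leftPart hpr τ) ∈ powersetCard p (univ.erase (Fin.last N)) := by
  refine mem_powersetCard.2
    ⟨fun y hy => ?_, card_image_univ_of_injective _ (leftPart_injective hpr τ)⟩
  obtain ⟨q, -, rfl⟩ := mem_image.1 hy
  refine mem_erase.2 ⟨?_, mem_univ _⟩
  rw [← hτ]
  exact τ.injective.ne (Fin.ne_of_val_ne (by simp; omega))

lemma image_rightPart (hτ : τ ⟨p, by omega⟩ = Fin.last N) :
    univ.image (rightPart hpr τ) = univ.erase (Fin.last N) \ univ.image (leftPart hpr τ) := by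
  refine eq_of_subset_of_card_le (fun y hy => ?_) ?_
  · obtain ⟨q, -, rfl⟩ := mem_image.1 hy
    simp only [mem_sdiff, mem_erase, mem_univ, mem_image, true_and, and_true, not_exists]
    refine ⟨?_, fun q' => τ.injective.ne (Fin.ne_of_val_ne (by simp; omega))⟩
    rw [← hτ]
    exact τ.injective.ne (Fin.ne_of_val_ne (by simp; omega))
  · rw [card_sdiff_of_mem_powersetCard hpr (image_leftPart_mem_powersetCard hpr hτ),
      card_image_univ_of_injective _ (rightPart_injective hpr τ)]

lemma gluePerm_rankPerm (hτ : τ ⟨p, by omega⟩ = Fin.last N) :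
    gluePerm hpr (image_leftPart_mem_powersetCard hpr hτ)
      (rankPerm (leftPart hpr τ) (leftPart_injective hpr τ))
      (rankPerm (rightPart hpr τ) (rightPart_injective hpr τ)) = τ := by
  refine Equiv.ext fun q => ?_
  rcases eq_castLE_or_val_eq_or_eq_add hpr q with ⟨q, rfl⟩ | hq | ⟨q, rfl⟩
  · rw [coe_gluePerm, glueFun_castLE, orderEmbOfFin_rankPerm _ _ rfl]
    rfl
  · rw [show q = ⟨p, by omega⟩ from Fin.ext hq, coe_gluePerm, glueFun_peak, hτ]
  · rw [coe_gluePerm, glueFun_right, orderEmbOfFin_rankPerm _ _ (image_rightPart hpr hτ)]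
    rfl

end Split

lemma List.getElem?_append_cons_cons {α : Type*} (u v : List α) (a b : α) (m : ℕ) :
    (u ++ a :: b :: v)[u.length + 1 + 1 + m]? = v[m]? := by
  rw [List.getElem?_append_right (by omega),
    show u.length + 1 + 1 + m - u.length = m + 1 + 1 by omega]
  rfl

lemma val_symm_last_eq_iff {N p : ℕ} (hp : p < N + 1) (τ : Equiv.Perm (Fin (N + 1))) :
    (τ.symm (Fin.last N) : ℕ) = p ↔ τ ⟨p, hp⟩ = Fin.last N := by
  rw [← Equiv.eq_symm_apply, Fin.ext_iff]
  exact eq_comm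

section PeakCount

variable {N : ℕ} (u v : List Bool)

lemma mem_ascentPerms_iff_of_peak (hN : u.length + 1 + 1 + (v.length + 1) = N + 1)
    {τ : Equiv.Perm (Fin (N + 1))} (hτ : τ ⟨u.length + 1, by omega⟩ = Fin.last N) :
    τ ∈ ascentPerms N (u ++ true :: false :: v) ↔
      rankPerm (leftPart hN τ) (leftPart_injective hN τ) ∈ ascentPerms u.length u ∧
        rankPerm (rightPart hN τ) (rightPart_injective hN τ) ∈ ascentPerms v.length v := by
  simp only [ascentPerms, mem_filter, mem_univ, true_and, rankPerm_lt_rankPerm_iff]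
  constructor
  · intro H
    refine ⟨fun m => ?_, fun m => ?_⟩
    · have := H ⟨m, by omega⟩
      rwa [List.getElem?_append_left m.isLt] at this
    · have := H ⟨u.length + 1 + 1 + m, by omega⟩
      rwa [List.getElem?_append_cons_cons] at this
  · rintro ⟨HL, HR⟩ ⟨m, hm⟩
    rcases lt_or_ge m u.length with h | h
    · rw [List.getElem?_append_left h]
      exact HL ⟨m, h⟩
    rcases lt_trichotomy m (u.length + 1) with h' | rfl | h'
    · obtain rfl : m = u.length := by omega
      refine iff_of_true ?_ (by simp)
      rw [show (⟨u.length, hm⟩ : Fin N).succ = ⟨u.length + 1, by omega⟩ from rfl, hτ,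
        Fin.lt_last_iff_ne_last, ← hτ]
      exact τ.injective.ne (Fin.ne_of_val_ne (by simp))
    · refine iff_of_false ?_ (by simp)
      rw [show (⟨u.length + 1, hm⟩ : Fin N).castSucc = ⟨u.length + 1, by omega⟩ from rfl,
        hτ]
      exact not_lt.2 (Fin.le_last _)
    obtain ⟨m, rfl⟩ : ∃ m', m = u.length + 1 + 1 + m' := ⟨m - (u.length + 2), by omega⟩
    rw [List.getElem?_append_cons_cons]
    exact HR ⟨m, by omega⟩

lemma card_filter_ascentPerms_peak_eq_card_product
    (hN : u.length + 1 + 1 + (v.length + 1) = N + 1) :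
    #{τ ∈ ascentPerms N (u ++ true :: false :: v) |
        τ ⟨u.length + 1, by omega⟩ = Fin.last N} =
      #(powersetCard (u.length + 1) (univ.erase (Fin.last N)) ×ˢ
        (ascentPerms u.length u ×ˢ ascentPerms v.length v)) := by
  refine card_bij'
    (fun τ _ => (univ.image (leftPart hN τ), rankPerm _ (leftPart_injective hN τ),
      rankPerm _ (rightPart_injective hN τ)))
    (fun x hx => gluePerm hN (mem_product.1 hx).1 x.2.1 x.2.2) ?_ ?_ ?_ ?_
  · intro τ hτ
    obtain ⟨hpat, hpeak⟩ := mem_filter.1 hτ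
    obtain ⟨hL, hR⟩ := (mem_ascentPerms_iff_of_peak u v hN hpeak).1 hpat
    exact mem_product.2 ⟨image_leftPart_mem_powersetCard hN hpeak, mem_product.2 ⟨hL, hR⟩⟩
  · rintro ⟨S, σ, ρ⟩ hx
    obtain ⟨hS, hx⟩ := mem_product.1 hx
    obtain ⟨hσ, hρ⟩ := mem_product.1 hx
    have hpeak := glueFun_peak hN hS σ ρ
    refine mem_filter.2 ⟨(mem_ascentPerms_iff_of_peak u v hN hpeak).2 ?_, hpeak⟩
    rw [rankPerm_leftPart_gluePerm, rankPerm_rightPart_gluePerm]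
    exact ⟨hσ, hρ⟩
  · intro τ hτ
    exact gluePerm_rankPerm hN (mem_filter.1 hτ).2
  · rintro ⟨S, σ, ρ⟩ hx
    simp only [image_leftPart_gluePerm, rankPerm_leftPart_gluePerm, rankPerm_rightPart_gluePerm]

theorem card_filter_ascentPerms_peak (hN : u.length + 1 + 1 + (v.length + 1) = N + 1) :
    #{τ ∈ ascentPerms N (u ++ true :: false :: v) |
        (τ.symm (Fin.last N) : ℕ) = u.length + 1} =
      N.choose (u.length + 1) * (#(ascentPerms u.length u) * #(ascentPerms v.length v)) := by
  rw [filter_congr fun τ _ => val_symm_last_eq_iff (p := u.length + 1) (by omega) τ,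
    card_filter_ascentPerms_peak_eq_card_product u v hN, card_product, card_product,
    card_powersetCard, card_erase_of_mem (mem_univ _), card_univ, Fintype.card_fin,
    Nat.add_sub_cancel]

end PeakCount

section PairList

variable (i j : ℕ → ℕ)

lemma pairList_cons (s : ℕ) (l : List ℕ) :
    pairList i j (s :: l) = i s :: j s :: pairList i j l :=
  rfl

lemma pairList_append (l l' : List ℕ) :
    pairList i j (l ++ l') = pairList i j l ++ pairList i j l' := by
  simp [pairList]

lemma ascentWord_pairList_append (b : Bool) (l a : List ℕ) :
    ascentWord b (pairList i j l ++ a) = ascentWord b (pairList i j l) ++ ascentWord b a := by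
  induction l with
  | nil => rfl
  | cons s l ih => simp [pairList_cons, ih]

lemma ascentWord_pairList_singleton (s : ℕ) :
    ascentWord true (pairList i j [s]) =
      List.replicate (i s) true ++ List.replicate (j s) false := by
  simp [pairList]

lemma getElem?_replicate_append_replicate_eq_some_true (a b m : ℕ) :
    (List.replicate a true ++ List.replicate b false)[m]? = some true ↔ m < a := by
  rw [List.getElem?_append]
  simp only [List.length_replicate, List.getElem?_replicate]
  split_ifs <;> simp_all

lemma sum_pairList_range (n : ℕ) :
    (pairList i j (List.range n)).sum = ∑ t ∈ range n, (i t + j t) := by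
  induction n with
  | zero => rfl
  | succ n ih =>
    rw [List.range_succ, pairList_append, List.sum_append, ih, sum_range_succ]
    simp [pairList]

lemma sum_range_add_add_le {k k' : ℕ} (h : k < k') :
    ∑ t ∈ range k, (i t + j t) + i k + j k ≤ ∑ t ∈ range k', (i t + j t) := by
  rw [add_assoc, ← sum_range_succ]
  exact sum_le_sum_of_subset (range_subset_range.2 h)

lemma getElem?_ascentWord_pairList_range (n m : ℕ) :
    (ascentWord true (pairList i j (List.range n)))[m]? = some true ↔
      ∃ t < n, ∑ s ∈ range t, (i s + j s) ≤ m ∧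
        m < ∑ s ∈ range t, (i s + j s) + i t := by
  induction n with
  | zero => simp [pairList]
  | succ n ih =>
    have hlen : (ascentWord true (pairList i j (List.range n))).length =
        ∑ s ∈ range n, (i s + j s) := by
      rw [length_ascentWord, sum_pairList_range]
    rw [List.range_succ, pairList_append, ascentWord_pairList_append]
    by_cases hm : m < ∑ s ∈ range n, (i s + j s)
    · rw [List.getElem?_append_left (hlen ▸ hm), ih]
      refine ⟨fun ⟨t, ht, h⟩ => ⟨t, by omega, h⟩, fun ⟨t, ht, h⟩ => ⟨t, ?_, h⟩⟩
      refine lt_of_le_of_ne (Nat.lt_succ_iff.1 ht) ?_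
      rintro rfl
      omega
    · rw [List.getElem?_append_right (hlen ▸ not_lt.1 hm), hlen, ascentWord_pairList_singleton,
        getElem?_replicate_append_replicate_eq_some_true]
      refine ⟨fun h => ⟨n, by omega, by omega, by omega⟩, fun ⟨t, ht, h⟩ => ?_⟩
      rcases Nat.lt_succ_iff_lt_or_eq.1 ht with ht | rfl
      · have := sum_range_add_add_le i j ht
        omega
      · omega

lemma pairList_range_eq {k n : ℕ} (hk : k < n) :
    pairList i j (List.range n) =
      pairList i j (List.range k) ++ i k :: j k :: pairList i j ((List.range n).drop (k + 1)) := by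
  conv_lhs => rw [← List.take_append_drop (k + 1) (List.range n), List.take_range,
    min_eq_left hk, List.range_succ]
  simp [pairList]

def peakLeft (k : ℕ) : List ℕ :=
  pairList i j (List.range k) ++ [i k - 1]

def peakRight (n k : ℕ) : List ℕ :=
  (j k - 1) :: pairList i j ((List.range n).drop (k + 1))

lemma ascentWord_pairList_range_eq {k n : ℕ} (hk : k < n) (hi : 0 < i k) (hj : 0 < j k) :
    ascentWord true (pairList i j (List.range n)) =
      ascentWord true (peakLeft i j k) ++ true :: false ::
        (ascentWord true (peakRight i j n k)).map not := by
  obtain ⟨a, ha⟩ : ∃ a, i k = a + 1 := ⟨i k - 1, by omega⟩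
  obtain ⟨b, hb⟩ : ∃ b, j k = b + 1 := ⟨j k - 1, by omega⟩
  rw [pairList_range_eq i j hk, peakLeft, peakRight, ascentWord_pairList_append,
    ascentWord_pairList_append, ha, hb, ascentWord_cons, List.replicate_succ']
  simp [ascentWord_false, Function.comp_def, List.replicate_succ]

lemma sum_peakLeft_add_sum_peakRight {k n : ℕ} (hk : k < n) (hi : 0 < i k) (hj : 0 < j k) :
    (peakLeft i j k).sum + (peakRight i j n k).sum + 2 = (pairList i j (List.range n)).sum := by
  have := congrArg List.length (ascentWord_pairList_range_eq i j hk hi hj)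
  simp only [length_ascentWord, List.length_append, List.length_cons, List.length_map] at this
  omega

lemma sum_peakLeft_add_one {k : ℕ} (hi : 0 < i k) :
    (peakLeft i j k).sum + 1 = ∑ t ∈ range k, (i t + j t) + i k := by
  rw [peakLeft, List.sum_append, sum_pairList_range, List.sum_singleton]
  omega

lemma card_filter_symm_last_eq_sum_peakLeft {k n : ℕ} (hk : k < n) (hi : 0 < i k)
    (hj : 0 < j k) :
    #{τ ∈ ascentPerms (pairList i j (List.range n)).sum
        (ascentWord true (pairList i j (List.range n))) |
        (τ.symm (Fin.last _) : ℕ) = (peakLeft i j k).sum + 1} =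
      (pairList i j (List.range n)).sum.choose ((peakLeft i j k).sum + 1) *
        (Omega (peakLeft i j k) * Omega (peakRight i j n k)) := by
  have hsum := sum_peakLeft_add_sum_peakRight i j hk hi hj
  have := card_filter_ascentPerms_peak (ascentWord true (peakLeft i j k))
    ((ascentWord true (peakRight i j n k)).map not) (N := (pairList i j (List.range n)).sum)
    (by simp; omega)
  rw [← ascentWord_pairList_range_eq i j hk hi hj, card_ascentPerms_map_not (by simp),
    List.length_map, length_ascentWord, length_ascentWord] at this
  rw [this, omega_eq_card_ascentPerms, omega_eq_card_ascentPerms]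

lemma exists_symm_last_eq_of_mem_ascentPerms {n : ℕ} (hn : 1 ≤ n)
    (hi : ∀ k < n, 0 < i k) (hj : ∀ k < n, 0 < j k)
    {τ : Equiv.Perm (Fin ((pairList i j (List.range n)).sum + 1))}
    (hτ : τ ∈ ascentPerms _ (ascentWord true (pairList i j (List.range n)))) :
    ∃ k < n, (τ.symm (Fin.last _) : ℕ) = ∑ t ∈ range k, (i t + j t) + i k := by
  obtain ⟨q, hq⟩ : ∃ q, τ.symm (Fin.last _) = q := ⟨_, rfl⟩
  have hτq : τ q = Fin.last _ := by rw [← hq, Equiv.apply_symm_apply]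
  rw [hq]
  have hqN := q.isLt
  have hpos : ∀ t < n, ∑ s ∈ range t, (i s + j s) + i t < (pairList i j (List.range n)).sum :=
    fun t ht => by
      have := sum_range_add_add_le i j ht
      have := hj t ht
      rw [sum_pairList_range]
      omega
  have hdesc (h : (q : ℕ) < (pairList i j (List.range n)).sum) :
      ¬ ∃ t < n, ∑ s ∈ range t, (i s + j s) ≤ q ∧
        q < ∑ s ∈ range t, (i s + j s) + i t := by
    rw [← getElem?_ascentWord_pairList_range]
    exact getElem?_ne_some_true_of_apply_castSucc_eq_last hτ (m := ⟨q, h⟩) hτq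
  rcases Nat.eq_zero_or_pos (q : ℕ) with h0 | h0
  · exact absurd ⟨0, hn, by simp [h0], by simpa [h0] using hi 0 hn⟩
      (hdesc (by have := hpos 0 hn; omega))
  obtain ⟨t, ht, hle, hlt⟩ := (getElem?_ascentWord_pairList_range i j n (q - 1)).1
    (getElem?_eq_some_true_of_apply_succ_eq_last hτ (m := ⟨q - 1, by omega⟩)
      (by rw [← hτq]; exact congrArg τ (Fin.ext (by simp; omega))))
  have hge : (q : ℕ) < (pairList i j (List.range n)).sum →
      ∑ s ∈ range t, (i s + j s) + i t ≤ q := fun h => by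
    by_contra hc
    exact hdesc h ⟨t, ht, by omega, by omega⟩
  have := hpos t ht
  exact ⟨t, ht, by omega⟩

theorem omega_pairList_range {n : ℕ} (hn : 1 ≤ n) (hi : ∀ k < n, 0 < i k)
    (hj : ∀ k < n, 0 < j k) :
    Omega (pairList i j (List.range n)) = ∑ k ∈ range n,
      (pairList i j (List.range n)).sum.choose ((peakLeft i j k).sum + 1) *
        (Omega (peakLeft i j k) * Omega (peakRight i j n k)) := by
  set A := pairList i j (List.range n)
  have hmaps : Set.MapsTo (fun τ : Equiv.Perm (Fin (A.sum + 1)) => (τ.symm (Fin.last _) : ℕ))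
      (ascentPerms A.sum (ascentWord true A))
      ((range n).image fun k => (peakLeft i j k).sum + 1) := by
    intro τ hτ
    obtain ⟨k, hk, hτk⟩ := exists_symm_last_eq_of_mem_ascentPerms i j hn hi hj hτ
    exact mem_image.2 ⟨k, mem_range.2 hk, (sum_peakLeft_add_one i j (hi k hk)).trans hτk.symm⟩
  have hinj : Set.InjOn (fun k => (peakLeft i j k).sum + 1) (range n) := by
    refine StrictMonoOn.injOn fun k hk k' hk' hkk' => ?_
    simp only [sum_peakLeft_add_one i j (hi k (mem_range.1 hk)),
      sum_peakLeft_add_one i j (hi k' (mem_range.1 hk'))]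
    have := sum_range_add_add_le i j hkk'
    have := hj k (mem_range.1 hk)
    omega
  rw [omega_eq_card_ascentPerms, card_eq_sum_card_fiberwise hmaps, sum_image hinj]
  refine sum_congr rfl fun k hk => ?_
  have hk := mem_range.1 hk
  exact card_filter_symm_last_eq_sum_peakLeft i j hk (hi k hk) (hj k hk)

end PairList

lemma cast_choose_mul_div_factorial (l r : ℕ) (x y : ℝ) :
    ((l + r + 2).choose (l + 1) : ℝ) * (x * y) / ((l + r + 2 + 1)! : ℕ) =
      1 / ((l + r + 2 : ℕ) + 1 : ℝ) * (x / ((l + 1)! : ℕ) * (y / ((r + 1)! : ℕ))) := by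
  have h := Nat.choose_mul_factorial_mul_factorial (show l + 1 ≤ l + r + 2 by omega)
  rw [show l + r + 2 - (l + 1) = r + 1 by omega] at h
  rw [Nat.factorial_succ, ← h]
  have : ((l + r + 2).choose (l + 1) : ℝ) ≠ 0 := by
    exact_mod_cast (Nat.choose_pos (by omega)).ne'
  push_cast
  field_simp

theorem stmt_7 (n : ℕ) (hn : 1 ≤ n) (i j : ℕ → ℕ)
    (hi : ∀ k < n, 0 < i k) (hj : ∀ k < n, 0 < j k) :
    Omega' (pairList i j (List.range n)) =
      (1 / ((∑ k ∈ Finset.range n, (i k + j k) : ℕ) + 1 : ℝ)) *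
        ∑ k ∈ Finset.range n,
          Omega' (pairList i j (List.range k) ++ [i k - 1]) *
            Omega' ((j k - 1) :: pairList i j ((List.range n).drop (k + 1))) := by
  change _ = _ * ∑ k ∈ range n, Omega' (peakLeft i j k) * Omega' (peakRight i j n k)
  rw [← sum_pairList_range, Omega', omega_pairList_range i j hn hi hj, Nat.cast_sum, sum_div,
    mul_sum]
  refine sum_congr rfl fun k hk => ?_
  have hk := mem_range.1 hk
  rw [Omega', Omega', ← sum_peakLeft_add_sum_peakRight i j hk (hi k hk) (hj k hk), Nat.cast_mul,
    Nat.cast_mul]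
  exact cast_choose_mul_div_factorial _ _ _ _
end

section
/- For every positive integer k, the conditional probability of the event {X₀ > X₁ > ⋯ > X_k and X_k < X_{k+1}} given the event {X₋₁ < X₀ and X₀ > X₁} equals 3(k² + 3k + 1)/(k+3)!. (In the language of the paper: if 0 is a local maximum point and μ₀ is the distance from 0 to the next local minimum point, then P{μ₀ = k} = 3(k² + 3k + 1)/(k+3)!.) -/
/-!
Write `R a n` (`descRun X a n`) for the event `X a > X (a+1) > ⋯ > X (a+n)`. Independence, identical
distribution and atomlessness make every finite family of distinct `X t` exchangeable and
tie-free, so its `n!` orderings are equally likely and `P (R a n) = 1 / (n+1)!`. Every other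
event involved is obtained from such runs by splitting on a single comparison
`X s < X u` versus `X u < X s`: with `a = 0`,
`P (X (-1) < X 0, R 0 n) = P (R 0 n) - P (R (-1) (n+1)) = 1/(n+1)! - 1/(n+2)!`, and then
`P (X (-1) < X 0, R 0 k, X k < X (k+1))` is the difference of this expression at `n = k` and
`n = k + 1`. The conditioning event is the case `n = 1`, of probability `1/3`.
-/

open MeasureTheory ProbabilityTheory Set Function
open scoped ENNReal Nat

theorem existsUnique_perm_strictAnti {β : Type*} [LinearOrder β] {n : ℕ} {x : Fin n → β}
    (hx : Injective x) : ∃! σ : Equiv.Perm (Fin n), StrictAnti (x ∘ σ) := by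
  have hsort : StrictMono (x ∘ Tuple.sort x) :=
    (Tuple.monotone_sort x).strictMono_of_injective (hx.comp (Tuple.sort x).injective)
  have hrev : StrictAnti (x ∘ Fin.revPerm.trans (Tuple.sort x)) :=
    hsort.comp_strictAnti Fin.rev_strictAnti
  exact ⟨_, hrev, fun τ hτ => Equiv.ext fun i =>
    hx (congrFun (Tuple.unique_antitone hτ.antitone hrev.antitone) i)⟩

theorem measurableSet_strictAnti (n : ℕ) : MeasurableSet {x : Fin n → ℝ | StrictAnti x} := by
  simp only [StrictAnti, ofPred_forall]
  measurability

theorem measure_strictAnti_of_exchangeable {Ω : Type*} [MeasurableSpace Ω] {μ : Measure Ω}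
    [IsProbabilityMeasure μ] {n : ℕ} {Y : Fin n → Ω → ℝ} (hY : ∀ i, Measurable (Y i))
    (hexch : ∀ σ : Equiv.Perm (Fin n),
      μ.map (fun ω i => Y (σ i) ω) = μ.map (fun ω i => Y i ω))
    (hties : ∀ i j, i ≠ j → μ {ω | Y i ω = Y j ω} = 0) :
    μ {ω | StrictAnti fun i => Y i ω} = (n ! : ℝ≥0∞)⁻¹ := by
  set E : Equiv.Perm (Fin n) → Set Ω := fun σ => {ω | StrictAnti ((fun i => Y i ω) ∘ σ)}
  have hmeas (σ : Equiv.Perm (Fin n)) : Measurable fun ω i => Y (σ i) ω :=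
    measurable_pi_lambda _ fun i => hY (σ i)
  have hE_meas (σ) : MeasurableSet (E σ) := hmeas σ (measurableSet_strictAnti n)
  have hE_eq (σ) : μ (E σ) = μ (E 1) := by
    change μ ((fun ω i => Y (σ i) ω) ⁻¹' {x | StrictAnti x}) =
      μ ((fun ω i => Y i ω) ⁻¹' {x | StrictAnti x})
    rw [← Measure.map_apply (hmeas σ) (measurableSet_strictAnti n), hexch,
      Measure.map_apply (measurable_pi_lambda _ hY) (measurableSet_strictAnti n)]
  have hdisj : Pairwise (Disjoint on E) := fun σ τ hστ => disjoint_left.mpr fun ω hσ hτ =>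
    hστ <| (existsUnique_perm_strictAnti
      ((Injective.of_comp_iff' _ σ.bijective).mp hσ.injective)).unique hσ hτ
  have hcover : μ (⋃ σ, E σ) = 1 := by
    rw [← prob_compl_eq_zero_iff (MeasurableSet.iUnion hE_meas)]
    refine measure_mono_null (fun ω hω => ?_)
      (measure_iUnion_null fun i => measure_iUnion_null fun j => measure_iUnion_null (hties i j))
    simp only [mem_compl_iff, mem_iUnion, not_exists] at hω
    by_contra hnotie
    simp only [mem_iUnion, not_exists] at hnotie
    obtain ⟨σ, hσ, -⟩ := existsUnique_perm_strictAnti (x := fun i => Y i ω)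
      fun i j hij => by_contra fun hne => hnotie i j hne hij
    exact hω σ hσ
  have hsum : μ (E 1) * n ! = 1 := by
    rw [← hcover, measure_iUnion hdisj hE_meas, tsum_fintype,
      Finset.sum_congr rfl fun σ _ => hE_eq σ, Finset.sum_const, Finset.card_univ,
      Fintype.card_perm, Fintype.card_fin, nsmul_eq_mul, mul_comm]
  exact ENNReal.eq_inv_of_mul_eq_one_left hsum

def descRun {Ω : Type*} (X : ℤ → Ω → ℝ) (a : ℤ) (n : ℕ) : Set Ω :=
  {ω | ∀ m : ℕ, m < n → X (a + m + 1) ω < X (a + m) ω}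

theorem descRun_eq_strictAnti {Ω : Type*} (X : ℤ → Ω → ℝ) (a : ℤ) (n : ℕ) :
    descRun X a n = {ω | StrictAnti fun i : Fin (n + 1) => X (a + i) ω} := by
  ext ω
  simp only [descRun, mem_ofPred_eq, Fin.strictAnti_iff_succ_lt, Fin.forall_iff, Fin.val_succ,
    Fin.val_castSucc, Nat.cast_add, Nat.cast_one, add_assoc]

theorem descRun_succ_right {Ω : Type*} (X : ℤ → Ω → ℝ) (a : ℤ) (n : ℕ) :
    descRun X a (n + 1) = descRun X a n ∩ {ω | X (a + n + 1) ω < X (a + n) ω} := by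
  ext ω
  simp only [descRun, mem_ofPred_eq, mem_inter_iff, Nat.forall_lt_succ_right]

theorem descRun_succ_left {Ω : Type*} (X : ℤ → Ω → ℝ) (a : ℤ) (n : ℕ) :
    descRun X (a - 1) (n + 1) = descRun X a n ∩ {ω | X a ω < X (a - 1) ω} := by
  ext ω
  simp only [descRun, mem_ofPred_eq, mem_inter_iff, Nat.forall_lt_succ_left, Nat.cast_zero,
    add_zero, sub_add_cancel, Nat.cast_succ, sub_add_add_cancel, and_comm]

theorem measure_eq_eq_zero_of_indepFun {Ω : Type*} [MeasurableSpace Ω] {μ : Measure Ω}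
    [IsFiniteMeasure μ] {Y Z : Ω → ℝ} (hY : Measurable Y) (hZ : Measurable Z)
    (hYZ : IndepFun Y Z μ) (hZ_atom : ∀ c, μ.map Z {c} = 0) : μ {ω | Y ω = Z ω} = 0 := by
  have hdiag : MeasurableSet {p : ℝ × ℝ | p.1 = p.2} :=
    measurableSet_eq_fun measurable_fst measurable_snd
  have hslice (x : ℝ) : Prod.mk x ⁻¹' {p : ℝ × ℝ | p.1 = p.2} = {x} := by
    ext y
    simp [eq_comm]
  change μ ((fun ω => (Y ω, Z ω)) ⁻¹' {p | p.1 = p.2}) = 0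
  rw [← Measure.map_apply (hY.prodMk hZ) hdiag,
    (indepFun_iff_map_prod_eq_prod_map_map hY.aemeasurable hZ.aemeasurable).mp hYZ,
    Measure.prod_apply hdiag]
  simp [hslice, hZ_atom]

theorem measureReal_inter_lt_eq_sub {Ω : Type*} [MeasurableSpace Ω] {μ : Measure Ω}
    [IsFiniteMeasure μ] {f g : Ω → ℝ} (hf : Measurable f) (hg : Measurable g)
    (hfg : μ {ω | f ω = g ω} = 0) (S : Set Ω) :
    μ.real (S ∩ {ω | g ω < f ω}) = μ.real S - μ.real (S ∩ {ω | f ω < g ω}) := by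
  have hcompl : {ω | g ω < f ω}ᶜ =ᵐ[μ] {ω | f ω < g ω} :=
    (measure_eq_zero_iff_ae_notMem.mp hfg).mono fun ω hne =>
      propext ⟨fun h => lt_of_le_of_ne (not_lt.mp h) hne, fun h => not_lt.mpr h.le⟩
  have hdiff : μ.real (S \ {ω | g ω < f ω}) = μ.real (S ∩ {ω | f ω < g ω}) := by
    rw [sdiff_eq]
    exact measureReal_congr ((ae_eq_refl S).inter hcompl)
  linarith [measureReal_inter_add_sdiff (μ := μ) (s := S) (measurableSet_lt hg hf)]

section IidSequence

variable {Ω : Type*} [MeasurableSpace Ω] {μ : Measure Ω} {X : ℤ → Ω → ℝ}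

theorem map_eq_pi_of_iIndepFun {ι : Type*} [Fintype ι] (hmeas : ∀ t, Measurable (X t))
    (hindep : iIndepFun X μ) (hident : ∀ t, μ.map (X t) = μ.map (X 0))
    {t : ι → ℤ} (ht : Injective t) :
    μ.map (fun ω i => X (t i) ω) = Measure.pi fun _ => μ.map (X 0) := by
  rw [(hindep.precomp ht).map_fun_eq_pi_map fun i => (hmeas _).aemeasurable]
  simp only [hident]

variable [IsProbabilityMeasure μ]

theorem measure_tie_eq_zero (hmeas : ∀ t, Measurable (X t)) (hindep : iIndepFun X μ)
    (hident : ∀ t, μ.map (X t) = μ.map (X 0)) (hatomless : ∀ c : ℝ, μ.map (X 0) {c} = 0)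
    {s u : ℤ} (hsu : s ≠ u) : μ {ω | X s ω = X u ω} = 0 :=
  measure_eq_eq_zero_of_indepFun (hmeas s) (hmeas u) (hindep.indepFun hsu) fun c => by
    rw [hident, hatomless]

variable (hmeas : ∀ t, Measurable (X t)) (hindep : iIndepFun X μ)
  (hident : ∀ t, μ.map (X t) = μ.map (X 0)) (hatomless : ∀ c : ℝ, μ.map (X 0) {c} = 0)
include hmeas hindep hident hatomless

theorem measure_descRun (a : ℤ) (n : ℕ) : μ (descRun X a n) = ((n + 1)! : ℝ≥0∞)⁻¹ := by
  have hinj : Injective fun i : Fin (n + 1) => a + (i : ℤ) := fun i j h => by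
    simpa [Fin.val_inj] using h
  rw [descRun_eq_strictAnti]
  refine measure_strictAnti_of_exchangeable (fun i => hmeas _) (fun σ => ?_) fun i j hij =>
    measure_tie_eq_zero hmeas hindep hident hatomless (hinj.ne hij)
  exact (map_eq_pi_of_iIndepFun hmeas hindep hident (hinj.comp σ.injective)).trans
    (map_eq_pi_of_iIndepFun hmeas hindep hident hinj).symm

theorem measureReal_descRun (a : ℤ) (n : ℕ) : μ.real (descRun X a n) = ((n + 1)! : ℝ)⁻¹ := by
  simp [measureReal_def, measure_descRun hmeas hindep hident hatomless]

theorem measureReal_descRun_inter_rise (a : ℤ) (n : ℕ) :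
    μ.real (descRun X a n ∩ {ω | X (a - 1) ω < X a ω}) =
      ((n + 1)! : ℝ)⁻¹ - ((n + 2)! : ℝ)⁻¹ := by
  rw [measureReal_inter_lt_eq_sub (hmeas a) (hmeas (a - 1))
      (measure_tie_eq_zero hmeas hindep hident hatomless (by omega)),
    ← descRun_succ_left, measureReal_descRun hmeas hindep hident hatomless,
    measureReal_descRun hmeas hindep hident hatomless]

theorem measureReal_descRun_inter_rise_inter_rise (a : ℤ) (n : ℕ) :
    μ.real (descRun X a n ∩ {ω | X (a - 1) ω < X a ω} ∩ {ω | X (a + n) ω < X (a + n + 1) ω}) =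
      ((n + 1)! : ℝ)⁻¹ - ((n + 2)! : ℝ)⁻¹ - (((n + 2)! : ℝ)⁻¹ - ((n + 3)! : ℝ)⁻¹) := by
  rw [measureReal_inter_lt_eq_sub (hmeas _) (hmeas _)
      (measure_tie_eq_zero hmeas hindep hident hatomless (by omega)),
    inter_right_comm, ← descRun_succ_right,
    measureReal_descRun_inter_rise hmeas hindep hident hatomless,
    measureReal_descRun_inter_rise hmeas hindep hident hatomless]

end IidSequence

theorem inv_factorial_second_difference (k : ℕ) :
    ((k + 1)! : ℝ)⁻¹ - ((k + 2)! : ℝ)⁻¹ - (((k + 2)! : ℝ)⁻¹ - ((k + 3)! : ℝ)⁻¹) =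
      ((k : ℝ) ^ 2 + 3 * k + 1) / (k + 3)! := by
  simp only [Nat.factorial_succ (k + 2), Nat.factorial_succ (k + 1)]
  push_cast
  field_simp
  ring

open MeasureTheory ProbabilityTheory in
theorem stmt_12
    {α : Type*} [MeasurableSpace α] (μ : Measure α) [IsProbabilityMeasure μ]
    (X : ℤ → α → ℝ) (hmeas : ∀ t, Measurable (X t))
    (hindep : iIndepFun X μ)
    (hident : ∀ t, Measure.map (X t) μ = Measure.map (X 0) μ)
    (hatomless : ∀ c : ℝ, Measure.map (X 0) μ {c} = 0)
    (k : ℕ) (hk : 0 < k) :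
    (μ[|{ω | X (-1) ω < X 0 ω ∧ X 1 ω < X 0 ω}])
        {ω | (∀ m : ℕ, m < k → X ((m : ℤ) + 1) ω < X (m : ℤ) ω) ∧
          X (k : ℤ) ω < X ((k : ℤ) + 1) ω} =
      ENNReal.ofReal (3 * ((k : ℝ) ^ 2 + 3 * k + 1) / Nat.factorial (k + 3)) := by
  set B := {ω | X (-1) ω < X 0 ω ∧ X 1 ω < X 0 ω}
  have hB : B = descRun X 0 1 ∩ {ω | X (0 - 1) ω < X 0 ω} := by
    ext ω
    simp [B, descRun, and_comm]
  have hBA : B ∩ {ω | (∀ m : ℕ, m < k → X ((m : ℤ) + 1) ω < X (m : ℤ) ω) ∧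
      X (k : ℤ) ω < X ((k : ℤ) + 1) ω} = descRun X 0 k ∩ {ω | X (0 - 1) ω < X 0 ω} ∩
        {ω | X (0 + k) ω < X (0 + k + 1) ω} := by
    ext ω
    simp only [B, descRun, mem_inter_iff, mem_ofPred_eq, zero_add, zero_sub]
    constructor
    · rintro ⟨⟨hrise, -⟩, hrun, hlast⟩
      exact ⟨⟨hrun, hrise⟩, hlast⟩
    · rintro ⟨⟨hrun, hrise⟩, hlast⟩
      exact ⟨⟨hrise, by simpa using hrun 0 hk⟩, hrun, hlast⟩
  have hB_real : μ.real B = 3⁻¹ := by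
    rw [hB, measureReal_descRun_inter_rise hmeas hindep hident hatomless]
    norm_num [Nat.factorial]
  have hB_meas : MeasurableSet B :=
    (measurableSet_lt (hmeas _) (hmeas _)).inter (measurableSet_lt (hmeas _) (hmeas _))
  rw [cond_apply hB_meas, hBA, ← ofReal_measureReal, ← ofReal_measureReal, hB_real,
    measureReal_descRun_inter_rise_inter_rise hmeas hindep hident hatomless,
    inv_factorial_second_difference, ← ENNReal.ofReal_inv_of_pos (by norm_num), inv_inv,
    ← ENNReal.ofReal_mul (by norm_num), mul_div_assoc]
end

section
/- Let n ∈ ℕ and k₀, …, kₙ be positive integers. Set T₀ := 0 and T_{j+1} := T_j + k_j for j = 0,…,n. Consider the event A: X₋₁ < X₀; for every even j ∈ {0,…,n}, X_{T_j} > X_{T_j+1} > ⋯ > X_{T_{j+1}}; for every odd j ∈ {0,…,n}, X_{T_j} < X_{T_j+1} < ⋯ < X_{T_{j+1}}; and finally X_{T_{n+1}} < X_{T_{n+1}+1} if n is even, X_{T_{n+1}} > X_{T_{n+1}+1} if n is odd. Then the conditional probability of A given the event {X₋₁ < X₀ and X₀ > X₁} equals 3·Ω'(1, k₀, k₁, …,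 kₙ, 1). (In the language of the paper: P{μ₀ = k₀, …, μₙ = kₙ} = 3·Ω'(1, k₀, …, kₙ, 1), where μ₀, μ₁, … are the successive distances between consecutive local extrema starting from the local maximum at 0.) -/
/-!
For i.i.d. samples with an atomless law, ties have probability zero, and the joint law is
invariant under permutations of the coordinates, so the relative order of `X s, …, X (s + N)` is
uniformly distributed over the `(N + 1)!` permutations. An event prescribing alternately
increasing and decreasing runs of lengths `a` is, up to ties, a union of `Ω(a)` such order cells
and therefore has probability `Ω(a) / (N + 1)!`. Read from `X (-1)` on, the event of the theorem is
the run pattern `(1, k₀, …, kₙ, 1)`, and since `k₀ > 0` it lies inside the conditioning event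
(a peak at `0`), which is the pattern `(1, 1)` of probability `Ω(1, 1) / 3! = 1 / 3`.
-/

open MeasureTheory ProbabilityTheory Function
open scoped ENNReal Nat

section OrderCell

variable {β : Type*} [LinearOrder β] {M : ℕ}

def orderCell (σ : Equiv.Perm (Fin M)) : Set (Fin M → β) :=
  {x | ∀ i j, x i < x j ↔ σ i < σ j}

lemma Equiv.Perm.eq_of_lt_iff_lt {σ τ : Equiv.Perm (Fin M)}
    (h : ∀ i j, σ i < σ j ↔ τ i < τ j) : σ = τ := by
  have hmono : StrictMono (τ ∘ σ.symm) := fun a b hab => by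
    simpa [← h] using hab
  ext i
  simpa using congrArg Fin.val (hmono.apply_eq (x := σ i)).symm

lemma disjoint_orderCell {σ τ : Equiv.Perm (Fin M)} (h : σ ≠ τ) :
    Disjoint (orderCell σ : Set (Fin M → β)) (orderCell τ) :=
  Set.disjoint_left.2 fun _ hσ hτ =>
    h (Equiv.Perm.eq_of_lt_iff_lt fun i j => (hσ i j).symm.trans (hτ i j))

lemma exists_mem_orderCell {x : Fin M → β} (hx : Injective x) :
    ∃ σ : Equiv.Perm (Fin M), x ∈ orderCell σ := by
  have hmono : StrictMono (x ∘ Tuple.sort x) :=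
    (Tuple.monotone_sort x).strictMono_of_injective (hx.comp (Tuple.sort x).injective)
  refine ⟨(Tuple.sort x)⁻¹, fun i j => ?_⟩
  simpa using hmono.lt_iff_lt (a := (Tuple.sort x)⁻¹ i) (b := (Tuple.sort x)⁻¹ j)

lemma comp_symm_mem_orderCell_one {x : Fin M → β} {σ : Equiv.Perm (Fin M)} :
    x ∘ σ.symm ∈ orderCell (1 : Equiv.Perm (Fin M)) ↔ x ∈ orderCell σ :=
  ⟨fun h i j => by simpa using h (σ i) (σ j),
    fun h i j => by simpa using h (σ.symm i) (σ.symm j)⟩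

end OrderCell

section Runs

variable {β : Type*} [LT β]

-- `MonotCond a τ` unfolds to `HasRuns a τ`.
def HasRuns (a : List ℕ) (x : Fin (a.sum + 1) → β) : Prop :=
  ∀ k, k < a.length →
    ∀ j, (a.take k).sum ≤ j → j < (a.take (k + 1)).sum →
      ∀ h : j + 1 < a.sum + 1,
        if k % 2 = 0
        then x ⟨j, Nat.lt_of_succ_lt h⟩ < x ⟨j + 1, h⟩
        else x ⟨j + 1, h⟩ < x ⟨j, Nat.lt_of_succ_lt h⟩

def SeqHasRuns (a : List ℕ) (y : ℕ → β) : Prop :=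
  ∀ k < a.length, ∀ j, (a.take k).sum ≤ j → j < (a.take (k + 1)).sum →
    if k % 2 = 0 then y j < y (j + 1) else y (j + 1) < y j

lemma hasRuns_congr {γ : Type*} [LT γ] {a : List ℕ} {x : Fin (a.sum + 1) → β}
    {x' : Fin (a.sum + 1) → γ} (h : ∀ i j, x i < x j ↔ x' i < x' j) :
    HasRuns a x ↔ HasRuns a x' := by
  simp only [HasRuns, h]

lemma hasRuns_iff_seqHasRuns (a : List ℕ) (y : ℕ → β) :
    HasRuns a (fun i => y i) ↔ SeqHasRuns a y := by
  refine forall₅_congr fun k _ j _ hj => ⟨fun h => h ?_, fun h _ => h⟩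
  have := List.sum_take_add_sum_drop a (k + 1)
  omega

lemma seqHasRuns_one_one (y : ℕ → β) :
    SeqHasRuns [1, 1] y ↔ y 0 < y 1 ∧ y 2 < y 1 := by
  refine ⟨fun h => ⟨by simpa using h 0 (by simp) 0 le_rfl (by simp),
    by simpa using h 1 (by simp) 1 (by simp) (by simp)⟩, ?_⟩
  rintro ⟨h01, h21⟩ k hk j hj hj'
  simp only [List.length_cons, List.length_nil] at hk
  interval_cases k
  · obtain rfl : j = 0 := by simpa using hj'
    simpa using h01
  · obtain rfl : j = 1 := by simp at hj hj'; omega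
    simpa using h21

end Runs

section Independence

variable {Ω : Type*} [MeasurableSpace Ω] {μ : Measure Ω}

lemma ProbabilityTheory.IndepFun.measure_eq_eq_zero [IsFiniteMeasure μ] {β : Type*}
    [MeasurableSpace β] [MeasurableEq β] {f g : Ω → β} (hfg : IndepFun f g μ)
    (hf : Measurable f) (hg : Measurable g) [NullSingletonClass (μ.map g)] :
    μ {ω | f ω = g ω} = 0 := by
  have hdiag : MeasurableSet {p : β × β | p.1 = p.2} := measurableSet_diagonal
  change μ ((fun ω => (f ω, g ω)) ⁻¹' {p | p.1 = p.2}) = 0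
  rw [← Measure.map_apply (hf.prodMk hg) hdiag, hfg.map_prod_eq_prod_map_map hf.aemeasurable
    hg.aemeasurable, Measure.prod_apply hdiag]
  simp [Set.preimage, measure_singleton]

lemma ProbabilityTheory.iIndepFun.ae_injective {ι β : Type*} [Countable ι] [MeasurableSpace β]
    [MeasurableEq β] {Y : ι → Ω → β} (hY : iIndepFun Y μ) (hm : ∀ i, Measurable (Y i))
    [∀ i, NullSingletonClass (μ.map (Y i))] :
    ∀ᵐ ω ∂μ, Injective fun i => Y i ω := by
  have := hY.isProbabilityMeasure
  simp only [Injective, ae_all_iff]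
  intro i j
  by_cases hij : i = j
  · exact ae_of_all _ fun _ _ => hij
  · filter_upwards [measure_eq_zero_iff_ae_notMem.1
      ((hY.indepFun hij).measure_eq_eq_zero (hm i) (hm j))] with ω hω h using absurd h hω

end Independence

section UniformOrder

variable {Ω : Type*} [MeasurableSpace Ω] {μ : Measure Ω} {M : ℕ} (ν : Measure ℝ)
  [IsProbabilityMeasure ν]

lemma measurableSet_orderCell (σ : Equiv.Perm (Fin M)) :
    MeasurableSet (orderCell σ : Set (Fin M → ℝ)) := by
  have hlt (i j : Fin M) : MeasurableSet {x : Fin M → ℝ | x i < x j} :=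
    measurableSet_lt (measurable_pi_apply i) (measurable_pi_apply j)
  simp only [orderCell, Set.ofPred_forall]
  refine .iInter fun i => .iInter fun j => ?_
  by_cases h : σ i < σ j
  · simpa [h] using hlt i j
  · simpa [h] using measurableSet_le (measurable_pi_apply j) (measurable_pi_apply i)

lemma pi_orderCell_eq_pi_orderCell_one (σ : Equiv.Perm (Fin M)) :
    Measure.pi (fun _ => ν) (orderCell σ) =
      Measure.pi (fun _ => ν) (orderCell (1 : Equiv.Perm (Fin M))) := by
  have hpre : orderCell σ = MeasurableEquiv.piCongrLeft (fun _ => ℝ) σ ⁻¹' orderCell 1 := by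
    ext x
    have : MeasurableEquiv.piCongrLeft (fun _ => ℝ) σ x = x ∘ σ.symm := by
      ext i
      simp [MeasurableEquiv.piCongrLeft, Equiv.piCongrLeft]
    rw [Set.mem_preimage, this, comp_symm_mem_orderCell_one]
  rw [hpre]
  exact (measurePreserving_piCongrLeft (fun _ => ν) σ).measure_preimage
    (measurableSet_orderCell 1).nullMeasurableSet

lemma pi_orderCell [NullSingletonClass ν] (σ : Equiv.Perm (Fin M)) :
    Measure.pi (fun _ => ν) (orderCell σ) = (M ! : ℝ≥0∞)⁻¹ := by
  set π := Measure.pi fun _ : Fin M => ν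
  have : ∀ i, NullSingletonClass (π.map fun x => x i) := fun i =>
    (measurePreserving_eval (fun _ => ν) i).map_eq ▸ inferInstance
  have hinj : ∀ᵐ x ∂π, Injective x :=
    (iIndepFun_pi (X := fun _ x => x) fun _ => aemeasurable_id).ae_injective
      (measurable_pi_apply ·)
  have hcover : π (⋃ τ, orderCell τ) = 1 := by
    refine (prob_compl_eq_zero_iff (.iUnion measurableSet_orderCell)).1 ?_
    filter_upwards [hinj] with x hx
    simpa using exists_mem_orderCell hx
  rw [measure_iUnion (fun τ τ' h => disjoint_orderCell h) measurableSet_orderCell, tsum_fintype,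
    Finset.sum_congr rfl fun τ _ => pi_orderCell_eq_pi_orderCell_one ν τ, Finset.sum_const,
    Finset.card_univ, Fintype.card_perm, Fintype.card_fin, nsmul_eq_mul, mul_comm] at hcover
  rw [pi_orderCell_eq_pi_orderCell_one]
  exact ENNReal.eq_inv_of_mul_eq_one_left hcover

lemma measure_exists_mem_orderCell [NullSingletonClass ν] {Y : Fin M → Ω → ℝ}
    (hm : ∀ i, Measurable (Y i)) (hY : iIndepFun Y μ) (hid : ∀ i, μ.map (Y i) = ν)
    (S : Finset (Equiv.Perm (Fin M))) :
    μ {ω | ∃ σ ∈ S, (fun i => Y i ω) ∈ orderCell σ} = S.card / M ! := by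
  have hlaw : μ.map (fun ω i => Y i ω) = Measure.pi fun _ => ν := by
    simp_rw [hY.map_fun_eq_pi_map fun i => (hm i).aemeasurable, hid]
  have hpre : {ω | ∃ σ ∈ S, (fun i => Y i ω) ∈ orderCell σ} =
      (fun ω i => Y i ω) ⁻¹' ⋃ σ ∈ S, orderCell σ := by
    ext ω
    simp
  rw [hpre, ← Measure.map_apply (measurable_pi_lambda _ hm)
    (Finset.measurableSet_biUnion S fun σ _ => measurableSet_orderCell σ), hlaw,
    measure_biUnion_finset (fun σ _ τ _ h => disjoint_orderCell h)
      fun σ _ => measurableSet_orderCell σ]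
  simp [pi_orderCell, div_eq_mul_inv]

lemma measure_hasRuns [NullSingletonClass ν] (a : List ℕ)
    {Y : Fin (a.sum + 1) → Ω → ℝ} (hm : ∀ i, Measurable (Y i)) (hY : iIndepFun Y μ)
    (hid : ∀ i, μ.map (Y i) = ν) :
    μ {ω | HasRuns a fun i => Y i ω} = Omega a / (a.sum + 1)! := by
  classical
  have : ∀ i, NullSingletonClass (μ.map (Y i)) := fun i => hid i ▸ inferInstance
  have hae : {ω | HasRuns a fun i => Y i ω} =ᵐ[μ]
      {ω | ∃ σ ∈ Finset.univ.filter (MonotCond a), (fun i => Y i ω) ∈ orderCell σ} := by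
    refine Filter.eventuallyEq_set.2 ?_
    filter_upwards [hY.ae_injective hm] with ω hω
    obtain ⟨σ, hσ⟩ := exists_mem_orderCell hω
    refine ⟨fun h => ⟨σ, Finset.mem_filter.2 ⟨Finset.mem_univ σ, (hasRuns_congr hσ).1 h⟩, hσ⟩,
      ?_⟩
    rintro ⟨τ, hτ, hωτ⟩
    exact (hasRuns_congr hωτ).2 (Finset.mem_filter.1 hτ).2
  rw [measure_congr hae, measure_exists_mem_orderCell ν hm hY hid, Omega,
    Nat.card_eq_fintype_card, Fintype.card_subtype]

lemma measure_seqHasRuns {X : ℤ → Ω → ℝ} (hm : ∀ t, Measurable (X t)) (hindep : iIndepFun X μ)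
    (hident : ∀ t, μ.map (X t) = μ.map (X 0)) [NullSingletonClass (μ.map (X 0))]
    (a : List ℕ) (s : ℤ) :
    μ {ω | SeqHasRuns a fun i => X (s + i) ω} = Omega a / (a.sum + 1)! := by
  have := hindep.isProbabilityMeasure
  have : IsProbabilityMeasure (μ.map (X 0)) :=
    Measure.isProbabilityMeasure_map (hm 0).aemeasurable
  have hinj : Injective fun i : Fin (a.sum + 1) => s + (i : ℤ) :=
    fun i j h => Fin.ext (by simpa using h)
  simp_rw [← hasRuns_iff_seqHasRuns]
  exact measure_hasRuns (μ.map (X 0)) a (fun i => hm _) (hindep.precomp hinj) fun i => hident _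

end UniformOrder

lemma omega_one_one : Omega [1, 1] = 2 := by
  have h (σ : Equiv.Perm (Fin ([1, 1].sum + 1))) :
      MonotCond [1, 1] σ ↔ σ 0 < σ 1 ∧ σ 2 < σ 1 := by
    have := (hasRuns_iff_seqHasRuns [1, 1] fun j => σ (Fin.ofNat _ j)).trans
      (seqHasRuns_one_one _)
    simp only [Fin.ofNat_val_eq_self] at this
    exact this
  rw [Omega, Nat.card_congr (Equiv.subtypeEquivRight h), Nat.card_eq_fintype_card]
  decide

lemma List.sum_map_range (k : ℕ → ℕ) (t : ℕ) :
    ((List.range t).map k).sum = ∑ l ∈ Finset.range t, k l :=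
  rfl

section ExtremaRuns

variable (n : ℕ) (k : ℕ → ℕ)

def extremaRuns : List ℕ := 1 :: ((List.range (n + 1)).map k ++ [1])

lemma length_extremaRuns : (extremaRuns n k).length = n + 3 := by
  simp [extremaRuns]

lemma sum_extremaRuns : (extremaRuns n k).sum = (∑ l ∈ Finset.range (n + 1), k l) + 2 := by
  rw [extremaRuns, List.sum_cons, List.sum_append, List.sum_singleton, List.sum_map_range]
  ring

lemma sum_take_succ_extremaRuns {t : ℕ} (ht : t ≤ n + 1) :
    ((extremaRuns n k).take (t + 1)).sum = 1 + ∑ l ∈ Finset.range t, k l := by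
  rw [extremaRuns, List.take_succ_cons, List.take_append_of_le_length (by simpa using ht),
    ← List.map_take, List.take_range, Nat.min_eq_left ht, List.sum_cons, List.sum_map_range]

lemma seqHasRuns_extremaRuns_iff {β : Type*} [LT β] (y : ℕ → β) :
    SeqHasRuns (extremaRuns n k) y ↔ y 0 < y 1 ∧
      (∀ j ≤ n, j % 2 = 0 → ∀ m, ∑ l ∈ Finset.range j, k l ≤ m →
        m < ∑ l ∈ Finset.range (j + 1), k l → y (m + 2) < y (m + 1)) ∧
      (∀ j ≤ n, j % 2 = 1 → ∀ m, ∑ l ∈ Finset.range j, k l ≤ m →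
        m < ∑ l ∈ Finset.range (j + 1), k l → y (m + 1) < y (m + 2)) ∧
      (if n % 2 = 0 then
        y (∑ l ∈ Finset.range (n + 1), k l + 1) < y (∑ l ∈ Finset.range (n + 1), k l + 2)
      else
        y (∑ l ∈ Finset.range (n + 1), k l + 2) < y (∑ l ∈ Finset.range (n + 1), k l + 1)) := by
  have hlen := length_extremaRuns n k
  have htake := @sum_take_succ_extremaRuns n k
  have htop : ((extremaRuns n k).take (n + 3)).sum = ∑ l ∈ Finset.range (n + 1), k l + 2 := by
    rw [List.take_of_length_le hlen.le, sum_extremaRuns]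
  constructor
  · intro H
    refine ⟨?_, fun j hj hpar m hm hm' => ?_, fun j hj hpar m hm hm' => ?_, ?_⟩
    · simpa using H 0 (by omega) 0 le_rfl (by rw [htake (t := 0) (Nat.zero_le _)]; simp)
    · have := H (j + 1) (by omega) (m + 1) (by rw [htake (by omega)]; omega)
        (by rw [htake (by omega)]; omega)
      rwa [if_neg (by omega)] at this
    · have := H (j + 1) (by omega) (m + 1) (by rw [htake (by omega)]; omega)
        (by rw [htake (by omega)]; omega)
      rwa [if_pos (by omega)] at this
    · have := H (n + 2) (by omega) (∑ l ∈ Finset.range (n + 1), k l + 1)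
        (by rw [htake le_rfl]; omega) (by rw [htop]; omega)
      split_ifs at this ⊢ <;> first | exact this | omega
  · rintro ⟨h0, heven, hodd, hlast⟩ t ht j hj hj'
    rcases t with _ | t
    · obtain rfl : j = 0 := by rw [htake (t := 0) (Nat.zero_le _)] at hj'; simpa using hj'
      simpa using h0
    rw [htake (by omega)] at hj
    obtain ⟨m, rfl⟩ : ∃ m, j = m + 1 := ⟨j - 1, by omega⟩
    rcases Nat.lt_or_ge t (n + 1) with htn | htn
    · rw [htake (by omega)] at hj'
      rcases Nat.mod_two_eq_zero_or_one t with hpar | hpar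
      · rw [if_neg (by omega)]
        exact heven t (by omega) hpar m (by omega) (by omega)
      · rw [if_pos (by omega)]
        exact hodd t (by omega) hpar m (by omega) (by omega)
    · obtain rfl : t = n + 1 := by omega
      rw [htop] at hj'
      obtain rfl : m = ∑ l ∈ Finset.range (n + 1), k l := by omega
      split_ifs at hlast ⊢ <;> first | exact hlast | omega

lemma seqHasRuns_one_one_of_extremaRuns {β : Type*} [LT β] {y : ℕ → β} (hk : 0 < k 0)
    (h : SeqHasRuns (extremaRuns n k) y) : SeqHasRuns [1, 1] y := by
  obtain ⟨h0, heven, -⟩ := (seqHasRuns_extremaRuns_iff n k y).1 h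
  exact (seqHasRuns_one_one y).2 ⟨h0, heven 0 n.zero_le rfl 0 le_rfl (by simpa using hk)⟩

lemma setOf_eq_seqHasRuns_extremaRuns {α β : Type*} [LT β] (X : ℤ → α → β) :
    {ω | X (-1) ω < X 0 ω ∧
          (∀ j ≤ n, j % 2 = 0 →
            ∀ m : ℕ, (∑ l ∈ Finset.range j, k l) ≤ m →
              m < (∑ l ∈ Finset.range (j + 1), k l) →
              X ((m : ℤ) + 1) ω < X (m : ℤ) ω) ∧
          (∀ j ≤ n, j % 2 = 1 →
            ∀ m : ℕ, (∑ l ∈ Finset.range j, k l) ≤ m →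
              m < (∑ l ∈ Finset.range (j + 1), k l) →
              X (m : ℤ) ω < X ((m : ℤ) + 1) ω) ∧
          (if n % 2 = 0 then
            X ((∑ l ∈ Finset.range (n + 1), k l : ℕ) : ℤ) ω <
              X (((∑ l ∈ Finset.range (n + 1), k l : ℕ) : ℤ) + 1) ω
          else
            X (((∑ l ∈ Finset.range (n + 1), k l : ℕ) : ℤ) + 1) ω <
              X ((∑ l ∈ Finset.range (n + 1), k l : ℕ) : ℤ) ω)} =
      {ω | SeqHasRuns (extremaRuns n k) fun i => X (-1 + i) ω} := by
  have hshift1 (z : ℤ) : -1 + (z + 1) = z := by ring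
  have hshift2 (z : ℤ) : -1 + (z + 2) = z + 1 := by ring
  ext ω
  simp only [Set.mem_ofPred_eq, seqHasRuns_extremaRuns_iff, Nat.cast_add, Nat.cast_ofNat,
    Nat.cast_one, Nat.cast_zero, hshift1, hshift2]
  norm_num

end ExtremaRuns

open MeasureTheory ProbabilityTheory in
theorem stmt_13_general
    {α : Type*} [MeasurableSpace α] (μ : Measure α)
    (X : ℤ → α → ℝ) (hmeas : ∀ t, Measurable (X t))
    (hindep : iIndepFun X μ)
    (hident : ∀ t, Measure.map (X t) μ = Measure.map (X 0) μ)
    (hatomless : ∀ c : ℝ, Measure.map (X 0) μ {c} = 0)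
    (n : ℕ) (k : ℕ → ℕ) (hk : ∀ j ≤ n, 0 < k j) :
    (μ[|{ω | X (-1) ω < X 0 ω ∧ X 1 ω < X 0 ω}])
        {ω | X (-1) ω < X 0 ω ∧
          (∀ j ≤ n, j % 2 = 0 →
            ∀ m : ℕ, (∑ l ∈ Finset.range j, k l) ≤ m →
              m < (∑ l ∈ Finset.range (j + 1), k l) →
              X ((m : ℤ) + 1) ω < X (m : ℤ) ω) ∧
          (∀ j ≤ n, j % 2 = 1 →
            ∀ m : ℕ, (∑ l ∈ Finset.range j, k l) ≤ m →
              m < (∑ l ∈ Finset.range (j + 1), k l) →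
              X (m : ℤ) ω < X ((m : ℤ) + 1) ω) ∧
          (if n % 2 = 0 then
            X ((∑ l ∈ Finset.range (n + 1), k l : ℕ) : ℤ) ω <
              X (((∑ l ∈ Finset.range (n + 1), k l : ℕ) : ℤ) + 1) ω
          else
            X (((∑ l ∈ Finset.range (n + 1), k l : ℕ) : ℤ) + 1) ω <
              X ((∑ l ∈ Finset.range (n + 1), k l : ℕ) : ℤ) ω)} =
      ENNReal.ofReal (3 * Omega' (1 :: ((List.range (n + 1)).map k ++ [1]))) := by
  have : NullSingletonClass (μ.map (X 0)) := ⟨hatomless⟩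
  have hCmeas : MeasurableSet {ω | X (-1) ω < X 0 ω ∧ X 1 ω < X 0 ω} :=
    (measurableSet_lt (hmeas _) (hmeas _)).inter (measurableSet_lt (hmeas _) (hmeas _))
  have hC : {ω | X (-1) ω < X 0 ω ∧ X 1 ω < X 0 ω} =
      {ω | SeqHasRuns [1, 1] fun i => X (-1 + i) ω} := by
    ext ω
    simp [seqHasRuns_one_one]
  have hAC : {ω | SeqHasRuns (extremaRuns n k) fun i => X (-1 + i) ω} ⊆
      {ω | SeqHasRuns [1, 1] fun i => X (-1 + i) ω} :=
    fun _ => seqHasRuns_one_one_of_extremaRuns n k (hk 0 n.zero_le)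
  have hthree : ((2 : ℕ) / (([1, 1].sum + 1)! : ℕ) : ℝ≥0∞)⁻¹ = 3 := by
    rw [ENNReal.inv_div (by simp) (by simp), eq_comm, ENNReal.eq_div_iff (by simp) (by simp)]
    norm_num [Nat.factorial]
  rw [cond_apply hCmeas, hC, setOf_eq_seqHasRuns_extremaRuns,
    Set.inter_eq_self_of_subset_right hAC, measure_seqHasRuns hmeas hindep hident,
    measure_seqHasRuns hmeas hindep hident, omega_one_one, hthree, Omega',
    ENNReal.ofReal_mul zero_le_three, ENNReal.ofReal_div_of_pos (by positivity),
    ENNReal.ofReal_natCast, ENNReal.ofReal_natCast, ENNReal.ofReal_ofNat]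
  rfl

open MeasureTheory ProbabilityTheory in
theorem stmt_13
    {α : Type*} [MeasurableSpace α] (μ : Measure α) [IsProbabilityMeasure μ]
    (X : ℤ → α → ℝ) (hmeas : ∀ t, Measurable (X t))
    (hindep : iIndepFun X μ)
    (hident : ∀ t, Measure.map (X t) μ = Measure.map (X 0) μ)
    (hatomless : ∀ c : ℝ, Measure.map (X 0) μ {c} = 0)
    (n : ℕ) (k : ℕ → ℕ) (hk : ∀ j ≤ n, 0 < k j) :
    (μ[|{ω | X (-1) ω < X 0 ω ∧ X 1 ω < X 0 ω}])
        {ω | X (-1) ω < X 0 ω ∧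
          (∀ j ≤ n, j % 2 = 0 →
            ∀ m : ℕ, (∑ l ∈ Finset.range j, k l) ≤ m →
              m < (∑ l ∈ Finset.range (j + 1), k l) →
              X ((m : ℤ) + 1) ω < X (m : ℤ) ω) ∧
          (∀ j ≤ n, j % 2 = 1 →
            ∀ m : ℕ, (∑ l ∈ Finset.range j, k l) ≤ m →
              m < (∑ l ∈ Finset.range (j + 1), k l) →
              X (m : ℤ) ω < X ((m : ℤ) + 1) ω) ∧
          (if n % 2 = 0 then
            X ((∑ l ∈ Finset.range (n + 1), k l : ℕ) : ℤ) ω <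
              X (((∑ l ∈ Finset.range (n + 1), k l : ℕ) : ℤ) + 1) ω
          else
            X (((∑ l ∈ Finset.range (n + 1), k l : ℕ) : ℤ) + 1) ω <
              X ((∑ l ∈ Finset.range (n + 1), k l : ℕ) : ℤ) ω)} =
      ENNReal.ofReal (3 * Omega' (1 :: ((List.range (n + 1)).map k ++ [1]))) :=
  stmt_13_general μ X hmeas hindep hident hatomless n k hk
end

section
/- Σ_{k=1}^{∞} k · 3(k² + 3k + 1)/(k+3)! = 3/2. (This is the expectation E μ₀ of the distance μ₀ from a local maximum at 0 to the next local minimum, whose distribution is P{μ₀ = k} = 3(k² + 3k + 1)/(k+3)!.) -/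
/-!
Writing `p k = 3 (k² + 3k + 1) / (k + 3)!`, the series telescopes:
`k p k = g k - g (k + 1)` for the tail mean `g k = ∑_{j ≥ k} j p j = 3 (k² + k + 1) / (k + 2)!`.
Since `g k ≤ 3 / k! → 0`, the sum is `g 0 = 3 / 2`; the extra `k = 0` term vanishes.
-/

open Filter Topology Nat

theorem hasSum_sub_succ_of_antitone {f : ℕ → ℝ} {l : ℝ} (hf : Antitone f)
    (hl : Tendsto f atTop (𝓝 l)) : HasSum (fun n ↦ f n - f (n + 1)) (f 0 - l) := by
  rw [hasSum_iff_tendsto_nat_of_nonneg fun n ↦ sub_nonneg.2 (hf n.le_succ)]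
  simp_rw [Finset.sum_range_sub']
  exact tendsto_const_nhds.sub hl

noncomputable def meanTail (k : ℕ) : ℝ := 3 * ((k : ℝ) ^ 2 + k + 1) / (k + 2)!

theorem mul_pmf_eq_meanTail_sub_meanTail_succ (k : ℕ) :
    k * (3 * ((k : ℝ) ^ 2 + 3 * k + 1) / (k + 3)!) = meanTail k - meanTail (k + 1) := by
  rw [meanTail, meanTail, show k + 1 + 2 = k + 2 + 1 by ring, factorial_succ (k + 2)]
  field_simp
  push_cast
  ring

theorem meanTail_antitone : Antitone meanTail :=
  antitone_nat_of_succ_le fun k ↦ sub_nonneg.1 <| by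
    rw [← mul_pmf_eq_meanTail_sub_meanTail_succ]
    positivity

theorem meanTail_le (k : ℕ) : meanTail k ≤ 3 / k ! := by
  have hfac : ((k + 2)! : ℝ) = (k + 2) * (k + 1) * k ! := by
    rw [factorial_succ, factorial_succ]
    push_cast
    ring
  rw [meanTail, hfac, div_le_div_iff₀ (by positivity) (by positivity)]
  have : (0 : ℝ) ≤ k ! := by positivity
  nlinarith

theorem tendsto_meanTail : Tendsto meanTail atTop (𝓝 0) := by
  have h := (FloorSemiring.tendsto_pow_div_factorial_atTop (1 : ℝ)).const_mul 3
  simp only [one_pow, mul_zero, ← mul_div_assoc, mul_one] at h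
  exact squeeze_zero (fun k ↦ by unfold meanTail; positivity) meanTail_le h

theorem stmt_14 :
    ∑' k : ℕ+, (k : ℝ) * (3 * ((k : ℝ) ^ 2 + 3 * k + 1) / Nat.factorial (k + 3)) =
      3 / 2 := by
  have hsum :
      HasSum (fun k : ℕ ↦ (k : ℝ) * (3 * ((k : ℝ) ^ 2 + 3 * k + 1) / (k + 3)!)) (3 / 2) := by
    convert hasSum_sub_succ_of_antitone meanTail_antitone tendsto_meanTail using 1
    · exact funext mul_pmf_eq_meanTail_sub_meanTail_succ
    · norm_num [meanTail]
  rw [← hsum.tsum_eq]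
  exact tsum_pnat_eq_tsum_of_eq_zero
    (f := fun k : ℕ ↦ (k : ℝ) * (3 * ((k : ℝ) ^ 2 + 3 * k + 1) / (k + 3)!)) (by simp)
end

section
/- Σ_{k=1}^{∞} k² · 3(k² + 3k + 1)/(k+3)! − (3/2)² = 6e − 63/4, where e is Euler's number. (This is the variance Var μ₀ ≈ 0.560 of the distance μ₀ from a local maximum at 0 to the next local minimum, whose distribution is P{μ₀ = k} = 3(k² + 3k + 1)/(k+3)! and whose mean is 3/2.) -/
/-!
Writing `3k²(k² + 3k + 1)` in the basis `(k+3)!/(k+3-j)!`, `j = 0, …, 4`, turns `k² p(k)` into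
`3/(k-1)! - 9/k! + 24/(k+1)! - 39/(k+2)! + 27/(k+3)!`. Each of these shifted exponential series
sums to `e` minus a partial sum, so the second moment is `6e - 27/2`, and subtracting the squared
mean `9/4` gives `6e - 63/4`.
-/

open Finset Real Nat

lemma hasSum_inv_factorial_add (j : ℕ) :
    HasSum (fun n : ℕ => 1 / ((n + j)! : ℝ)) (exp 1 - ∑ i ∈ range j, 1 / (i ! : ℝ)) := by
  refine (hasSum_nat_add_iff' j).2 ?_
  simpa [exp_eq_exp_ℝ] using NormedSpace.expSeries_div_hasSum_exp (1 : ℝ)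

lemma sq_mul_pmf_succ_eq (n : ℕ) :
    ((n + 1 : ℕ) : ℝ) ^ 2 * (3 * (((n + 1 : ℕ) : ℝ) ^ 2 + 3 * (n + 1 : ℕ) + 1) / (n + 1 + 3)!) =
      3 * (1 / n !) - 9 * (1 / (n + 1)!) + 24 * (1 / (n + 2)!) - 39 * (1 / (n + 3)!)
        + 27 * (1 / (n + 4)!) := by
  simp only [show n + 1 + 3 = n + 4 from rfl, factorial_succ]
  push_cast
  field_simp
  ring

theorem stmt_15 :
    ∑' k : ℕ+, (k : ℝ) ^ 2 * (3 * ((k : ℝ) ^ 2 + 3 * k + 1) / Nat.factorial (k + 3)) -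
        (3 / 2) ^ 2 =
      6 * Real.exp 1 - 63 / 4 := by
  have hsum := ((((hasSum_inv_factorial_add 0).mul_left 3).sub
    ((hasSum_inv_factorial_add 1).mul_left 9)).add ((hasSum_inv_factorial_add 2).mul_left 24)).sub
    ((hasSum_inv_factorial_add 3).mul_left 39) |>.add ((hasSum_inv_factorial_add 4).mul_left 27)
  simp only [add_zero] at hsum
  rw [tsum_pnat_eq_tsum_succ
      (f := fun k : ℕ => (k : ℝ) ^ 2 * (3 * ((k : ℝ) ^ 2 + 3 * k + 1) / (k + 3)!)),
    tsum_congr sq_mul_pmf_succ_eq, hsum.tsum_eq]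
  norm_num [sum_range_succ, factorial]
  ring
end

section
/- For every real x with |x| < π/2, one has 1/cosh(x) = Σ_{n=0}^{∞} (−1)ⁿ · b_{2n} · x^{2n}/(2n)!, where b_0 := 1 and, for n ≥ 1, b_{2n} is the number of alternating permutations of {0, 1, …, 2n−1}. (Equivalently, the Euler numbers E_{2n} defined by 1/cosh(x) = Σ (E_k/k!)xᵏ satisfy b_{2n} = (−1)ⁿ E_{2n}.) -/
/-!
Put `aₙ = (-1)ⁿ b₂ₙ / (2n)!`. For `n ≥ 1`, `∑_{i+j=n} (-1)ⁱ C(2n, 2j) b₂ᵢ = 0`: the product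
`C(2n, 2j) b₂ᵢ` counts the permutations of `{0, …, 2n-1}` that increase on the first `2j` positions
and alternate on the remaining `2i`, and moving this boundary up or down by two is a
sign-reversing involution on the pairs `(j, w)`. Hence `(∑ aₙ wⁿ) (∑ wⁿ / (2n)!) = 1`, so
`∑ aₙ z²ⁿ = 1 / cosh z` for `|z| < 1`, where `|aₙ| ≤ 1` makes everything converge absolutely.
As `cosh z = cos (i z)` has no zero in `|z| < π / 2`, the Taylor series of `1 / cosh` at `0`, which
is this series by uniqueness of power series, converges to it on that whole disc.
-/

/-- A permutation `τ` of `{0, …, m−1}` is alternating if `τ(j) < τ(j+1)` for even `j`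
and `τ(j) > τ(j+1)` for odd `j`, for all `0 ≤ j < m − 1`. -/
def IsAlternating (m : ℕ) (τ : Equiv.Perm (Fin m)) : Prop :=
  ∀ j : ℕ, ∀ h : j + 1 < m,
    if j % 2 = 0
    then τ ⟨j, Nat.lt_of_succ_lt h⟩ < τ ⟨j + 1, h⟩
    else τ ⟨j + 1, h⟩ < τ ⟨j, Nat.lt_of_succ_lt h⟩

/-- `b m` is the number of alternating permutations of the `m`-element set `{0, …, m−1}`. -/
noncomputable def altCount (m : ℕ) : ℕ :=
  Nat.card {τ : Equiv.Perm (Fin m) // IsAlternating m τ}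

open Finset Equiv
open scoped Nat

section IncreasingThenAlternating

variable {α : Type*} {m : ℕ}

def IsIncreasingBelow [LT α] (t : ℕ) (f : Fin m → α) : Prop :=
  ∀ k (h : k + 1 < m), k + 1 < t → f ⟨k, by omega⟩ < f ⟨k + 1, h⟩

def IsAlternatingFrom [LT α] (t : ℕ) (f : Fin m → α) : Prop :=
  ∀ k (h : k + 1 < m), t ≤ k →
    if k % 2 = 0 then f ⟨k, by omega⟩ < f ⟨k + 1, h⟩ else f ⟨k + 1, h⟩ < f ⟨k, by omega⟩

/-- The positions `t - 1` and `t` are not compared. -/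
def IsIncreasingThenAlternating [LT α] (t : ℕ) (f : Fin m → α) : Prop :=
  IsIncreasingBelow t f ∧ IsAlternatingFrom t f

namespace IsIncreasingThenAlternating

variable {j : ℕ} {f : Fin m → α}

theorem add_two [Preorder α] (hf : IsIncreasingThenAlternating (2 * j) f)
    (hjunction : ∀ k (h : k + 1 < m), k + 1 = 2 * j → f ⟨k, by omega⟩ < f ⟨k + 1, h⟩) :
    IsIncreasingThenAlternating (2 * (j + 1)) f := by
  refine ⟨fun k h hk => ?_, fun k h hk => hf.2 k h (by omega)⟩
  rcases lt_trichotomy (k + 1) (2 * j) with hlt | heq | hgt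
  · exact hf.1 k h hlt
  · exact hjunction k h heq
  · simpa [show k % 2 = 0 by omega] using hf.2 k h (by omega)

theorem not_add_four [Preorder α] (hf : IsIncreasingThenAlternating (2 * j) f)
    (hm : 2 * (j + 2) ≤ m) : ¬ IsIncreasingThenAlternating (2 * (j + 2)) f := by
  intro hf'
  have hfall := hf.2 (2 * j + 1) (by omega) (by omega)
  rw [if_neg (by omega)] at hfall
  exact lt_asymm hfall (hf'.1 (2 * j + 1) (by omega) (by omega))

theorem of_add_two [LinearOrder α] (hinj : Function.Injective f)
    (hf : IsIncreasingThenAlternating (2 * (j + 1)) f)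
    (hnot : ¬ (2 * (j + 1) < m ∧ IsIncreasingThenAlternating (2 * (j + 2)) f)) :
    IsIncreasingThenAlternating (2 * j) f := by
  refine ⟨fun k h hk => hf.1 k h (by omega), fun k h hk => ?_⟩
  by_cases hk' : 2 * (j + 1) ≤ k
  · exact hf.2 k h hk'
  by_cases hk2 : k = 2 * j
  · rw [if_pos (by omega)]
    exact hf.1 k h (by omega)
  rw [if_neg (by omega)]
  refine lt_of_not_ge fun hle => hnot ⟨by omega, hf.add_two fun k' h' hk'' => ?_⟩
  obtain rfl : k' = k := by omega
  exact hle.lt_of_ne fun heq => by simpa using hinj heq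

end IsIncreasingThenAlternating

end IncreasingThenAlternating

section Shuffle

variable {α : Type*} {t s : ℕ}

theorem strictMono_comp_castAdd_iff [Preorder α] {f : Fin (t + s) → α} :
    StrictMono (fun i : Fin t => f (Fin.castAdd s i)) ↔ IsIncreasingBelow t f := by
  cases t with
  | zero => exact iff_of_true (Subsingleton.strictMono _) fun _ _ hk => absurd hk (by omega)
  | succ t =>
    rw [Fin.strictMono_iff_lt_succ]
    exact ⟨fun H k h hk => H ⟨k, by omega⟩, fun H i => H i (by omega) (by simp)⟩

theorem isAlternatingFrom_iff_isAlternating [Preorder α] {f : Fin (t + s) → α}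
    {e : Fin s ↪o α} {τ : Perm (Fin s)} (ht : Even t) (hf : ∀ a, f (Fin.natAdd t a) = e (τ a)) :
    IsAlternatingFrom t f ↔ IsAlternating s τ := by
  have hval : ∀ a (h : a < s), f ⟨t + a, by omega⟩ = e (τ ⟨a, h⟩) := fun a h => hf ⟨a, h⟩
  have hval_succ : ∀ a (h : a + 1 < s), f ⟨t + a + 1, by omega⟩ = e (τ ⟨a + 1, h⟩) :=
    fun a h => hf ⟨a + 1, h⟩
  obtain ⟨r, rfl⟩ := ht
  constructor
  · intro H a ha
    have := H (r + r + a) (by omega) (by omega)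
    rwa [hval a (by omega), hval_succ a ha,
      e.lt_iff_lt, e.lt_iff_lt, show (r + r + a) % 2 = a % 2 by omega] at this
  · intro H k h hk
    obtain ⟨a, rfl⟩ : ∃ a, k = r + r + a := ⟨k - (r + r), by omega⟩
    have := H a (by omega)
    rwa [hval a (by omega), hval_succ a (by omega),
      e.lt_iff_lt, e.lt_iff_lt, show (r + r + a) % 2 = a % 2 by omega]

theorem card_compl_of_card_eq {S : Finset (Fin (t + s))} (hS : S.card = t) : Sᶜ.card = s := by
  rw [card_compl, Fintype.card_fin, hS, Nat.add_sub_cancel_left]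

noncomputable def shuffle (S : Finset (Fin (t + s))) (hS : S.card = t) (τ : Perm (Fin s)) :
    Perm (Fin (t + s)) :=
  Equiv.ofBijective
    (Fin.append (S.orderEmbOfFin hS) (Sᶜ.orderEmbOfFin (card_compl_of_card_eq hS) ∘ τ))
    (Finite.injective_iff_bijective.mp <| Fin.append_injective_iff.mpr
      ⟨(S.orderEmbOfFin hS).injective, (Sᶜ.orderEmbOfFin _).injective.comp τ.injective,
        fun i _ heq => mem_compl.mp (heq ▸ orderEmbOfFin_mem _ _ _) (orderEmbOfFin_mem S hS i)⟩)

variable (S : Finset (Fin (t + s))) (hS : S.card = t) (τ : Perm (Fin s))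

@[simp]
theorem shuffle_castAdd (i : Fin t) : shuffle S hS τ (Fin.castAdd s i) = S.orderEmbOfFin hS i := by
  simp [shuffle]

@[simp]
theorem shuffle_natAdd (a : Fin s) :
    shuffle S hS τ (Fin.natAdd t a) = Sᶜ.orderEmbOfFin (card_compl_of_card_eq hS) (τ a) := by
  simp [shuffle]

variable {S hS τ}

theorem isIncreasingThenAlternating_shuffle (ht : Even t) (hτ : IsAlternating s τ) :
    IsIncreasingThenAlternating t (shuffle S hS τ) :=
  ⟨strictMono_comp_castAdd_iff.mp (by simpa using (S.orderEmbOfFin hS).strictMono),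
    (isAlternatingFrom_iff_isAlternating ht (shuffle_natAdd S hS τ)).mpr hτ⟩

theorem eq_and_eq_of_shuffle_eq {S' : Finset (Fin (t + s))} {hS' : S'.card = t} {τ' : Perm (Fin s)}
    (h : shuffle S hS τ = shuffle S' hS' τ') : S = S' ∧ τ = τ' := by
  have hhead (i : Fin t) : S.orderEmbOfFin hS i = S'.orderEmbOfFin hS' i := by
    simpa using congrArg (· (Fin.castAdd s i)) h
  obtain rfl : S = S' := by
    rw [← image_orderEmbOfFin_univ S hS, ← image_orderEmbOfFin_univ S' hS']
    exact image_congr fun i _ => hhead i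
  refine ⟨rfl, Equiv.ext fun a => (Sᶜ.orderEmbOfFin (card_compl_of_card_eq hS)).injective ?_⟩
  simpa using congrArg (· (Fin.natAdd t a)) h

theorem exists_shuffle_eq {w : Perm (Fin (t + s))} (ht : Even t)
    (hw : IsIncreasingThenAlternating t w) :
    ∃ (S : Finset (Fin (t + s))) (hS : S.card = t) (τ : Perm (Fin s)),
      IsAlternating s τ ∧ shuffle S hS τ = w := by
  classical
  set S := univ.image fun i : Fin t => w (Fin.castAdd s i)
  have hS : S.card = t := by
    rw [card_image_of_injective _ fun i j h => Fin.castAdd_injective _ _ (w.injective h),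
      card_univ, Fintype.card_fin]
  have htail (a : Fin s) : w (Fin.natAdd t a) ∈ Sᶜ := by
    rw [mem_compl, mem_image]
    rintro ⟨i, -, hi⟩
    have := Fin.ext_iff.mp (w.injective hi)
    rw [Fin.val_castAdd, Fin.val_natAdd] at this
    omega
  set e := Sᶜ.orderIsoOfFin (card_compl_of_card_eq hS)
  have he (a : Fin s) :
      Sᶜ.orderEmbOfFin (card_compl_of_card_eq hS) (e.symm ⟨_, htail a⟩) = w (Fin.natAdd t a) := by
    rw [← coe_orderIsoOfFin_apply, OrderIso.apply_symm_apply]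
  let τ : Perm (Fin s) := Equiv.ofBijective (fun a => e.symm ⟨_, htail a⟩)
    (Finite.injective_iff_bijective.mp fun a b hab => by
      simpa [w.injective.eq_iff] using
        congrArg (Sᶜ.orderEmbOfFin (card_compl_of_card_eq hS)) hab)
  refine ⟨S, hS, τ, (isAlternatingFrom_iff_isAlternating ht fun a => (he a).symm).mp hw.2,
    Equiv.ext fun i => Fin.addCases (fun i => ?_) (fun a => ?_) i⟩
  · have hunique := orderEmbOfFin_unique hS (fun i => mem_image_of_mem _ (mem_univ i))
      (strictMono_comp_castAdd_iff.mpr hw.1)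
    simp [← hunique]
  · simpa [τ] using he a

end Shuffle

theorem card_isIncreasingThenAlternating {m t s : ℕ} (ht : Even t) (hm : t + s = m) :
    Nat.card {w : Perm (Fin m) // IsIncreasingThenAlternating t w} = m.choose t * altCount s := by
  subst hm
  classical
  let F : {S : Finset (Fin (t + s)) // S.card = t} × {τ : Perm (Fin s) // IsAlternating s τ} →
      {w : Perm (Fin (t + s)) // IsIncreasingThenAlternating t w} :=
    fun p => ⟨shuffle p.1.1 p.1.2 p.2.1, isIncreasingThenAlternating_shuffle ht p.2.2⟩
  have hF : Function.Bijective F := by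
    refine ⟨fun p q h => ?_, fun w => ?_⟩
    · obtain ⟨hS, hτ⟩ := eq_and_eq_of_shuffle_eq (congrArg Subtype.val h)
      exact Prod.ext (Subtype.ext hS) (Subtype.ext hτ)
    · obtain ⟨S, hS, τ, hτ, h⟩ := exists_shuffle_eq ht w.2
      exact ⟨(⟨S, hS⟩, ⟨τ, hτ⟩), Subtype.ext h⟩
  rw [← Nat.card_eq_of_bijective F hF, Nat.card_prod, Nat.card_eq_fintype_card,
    Fintype.card_finset_len, Fintype.card_fin, altCount]

open scoped Classical in
theorem sum_filter_isIncreasingThenAlternating_neg_one_pow {M : ℕ} (hM : M ≠ 0) :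
    ∑ q ∈ (antidiagonal M ×ˢ univ).filter
      (fun q : (ℕ × ℕ) × Perm (Fin (2 * M)) => IsIncreasingThenAlternating (2 * q.1.2) q.2),
      (-1 : ℤ) ^ q.1.1 = 0 := by
  set X := (antidiagonal M ×ˢ univ).filter
    fun q : (ℕ × ℕ) × Perm (Fin (2 * M)) => IsIncreasingThenAlternating (2 * q.1.2) q.2
  let g : (ℕ × ℕ) × Perm (Fin (2 * M)) → (ℕ × ℕ) × Perm (Fin (2 * M)) := fun q =>
    if q.1.1 ≠ 0 ∧ IsIncreasingThenAlternating (2 * (q.1.2 + 1)) q.2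
    then ((q.1.1 - 1, q.1.2 + 1), q.2) else ((q.1.1 + 1, q.1.2 - 1), q.2)
  have key : ∀ q ∈ X, g q ∈ X ∧ g (g q) = q ∧ (-1 : ℤ) ^ q.1.1 + (-1) ^ (g q).1.1 = 0 := by
    rintro ⟨⟨i, j⟩, w⟩ hq
    simp only [X, mem_filter, mem_product, HasAntidiagonal.mem_antidiagonal, mem_univ,
      and_true] at hq ⊢
    obtain ⟨hij, hw⟩ := hq
    by_cases hup : i ≠ 0 ∧ IsIncreasingThenAlternating (2 * (j + 1)) w
    · obtain ⟨i, rfl⟩ : ∃ i', i = i' + 1 := ⟨i - 1, by omega⟩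
      have hdown : ¬ (i ≠ 0 ∧ IsIncreasingThenAlternating (2 * (j + 1 + 1)) w) :=
        fun h => hw.not_add_four (by omega) h.2
      have hg : g ((i + 1, j), w) = ((i, j + 1), w) := if_pos hup
      have hg' : g ((i, j + 1), w) = ((i + 1, j), w) := if_neg hdown
      rw [hg, hg']
      exact ⟨⟨by dsimp only; omega, hup.2⟩, rfl, by ring⟩
    · have hj : j ≠ 0 := by
        rintro rfl
        exact hup ⟨by omega, hw.add_two fun k h hk => by omega⟩
      obtain ⟨j, rfl⟩ : ∃ j', j = j' + 1 := ⟨j - 1, by omega⟩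
      have hw' := hw.of_add_two w.injective fun h => hup ⟨by omega, h.2⟩
      have hg : g ((i, j + 1), w) = ((i + 1, j), w) := if_neg hup
      have hg' : g ((i + 1, j), w) = ((i, j + 1), w) := if_pos ⟨i.succ_ne_zero, hw⟩
      rw [hg, hg']
      exact ⟨⟨by dsimp only; omega, hw'⟩, rfl, by ring⟩
  refine sum_involution (fun q _ => g q) (fun q hq => (key q hq).2.2) (fun q hq _ hgq => ?_)
    (fun q hq => (key q hq).1) (fun q hq => (key q hq).2.1)
  have hsign := (key q hq).2.2
  rw [hgq, ← two_mul] at hsign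
  simp at hsign

theorem sum_antidiagonal_neg_one_pow_mul_card {M : ℕ} (hM : M ≠ 0) :
    ∑ p ∈ antidiagonal M, (-1 : ℤ) ^ p.1 *
      Nat.card {w : Perm (Fin (2 * M)) // IsIncreasingThenAlternating (2 * p.2) w} = 0 := by
  classical
  rw [← sum_filter_isIncreasingThenAlternating_neg_one_pow hM, sum_filter, sum_product]
  refine sum_congr rfl fun p _ => ?_
  dsimp only
  rw [← sum_filter, sum_const, Nat.card_eq_fintype_card, Fintype.card_subtype, nsmul_eq_mul,
    mul_comm]

noncomputable def sechCoeff (n : ℕ) : ℝ := (-1) ^ n * altCount (2 * n) / (2 * n)!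

theorem altCount_zero : altCount 0 = 1 := by
  rw [altCount, Nat.card_eq_one_iff_unique]
  exact ⟨inferInstance, ⟨⟨1, fun _ h => by omega⟩⟩⟩

theorem altCount_le_factorial (m : ℕ) : altCount m ≤ m ! :=
  calc altCount m ≤ Nat.card (Perm (Fin m)) := Finite.card_subtype_le _
    _ = m ! := by rw [Nat.card_perm, Nat.card_eq_fintype_card, Fintype.card_fin]

theorem sechCoeff_zero : sechCoeff 0 = 1 := by
  simp [sechCoeff, altCount_zero]

theorem abs_sechCoeff_le_one (n : ℕ) : |sechCoeff n| ≤ 1 := by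
  rw [sechCoeff, abs_div, abs_mul, abs_pow, abs_neg, abs_one, one_pow, one_mul, Nat.abs_cast,
    Nat.abs_cast]
  exact div_le_one_of_le₀ (mod_cast altCount_le_factorial _) (Nat.cast_nonneg _)

theorem sum_antidiagonal_sechCoeff_div_factorial {M : ℕ} (hM : M ≠ 0) :
    ∑ p ∈ antidiagonal M, sechCoeff p.1 / (2 * p.2)! = 0 := by
  have hterm : ∀ p ∈ antidiagonal M, sechCoeff p.1 / (2 * p.2)! =
      (((-1 : ℤ) ^ p.1 * Nat.card {w : Perm (Fin (2 * M)) //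
        IsIncreasingThenAlternating (2 * p.2) w} : ℤ) : ℝ) / (2 * M)! := by
    rintro ⟨i, j⟩ hp
    rw [HasAntidiagonal.mem_antidiagonal] at hp
    have hchoose := Nat.add_choose_mul_factorial_mul_factorial (2 * i) (2 * j)
    rw [show 2 * i + 2 * j = 2 * M by omega] at hchoose
    rw [card_isIncreasingThenAlternating (even_two_mul j) (show 2 * j + 2 * i = 2 * M by omega),
      sechCoeff, ← hchoose]
    have hchoose_ne : ((2 * M).choose (2 * j) : ℝ) ≠ 0 := mod_cast (Nat.choose_pos (by omega)).ne'
    push_cast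
    field_simp
  rw [sum_congr rfl hterm, ← sum_div, ← Int.cast_sum, sum_antidiagonal_neg_one_pow_mul_card hM,
    Int.cast_zero, zero_div]

theorem summable_norm_mul_pow {R : Type*} [NormedRing R] [NormOneClass R] {c : ℕ → R}
    (hc : ∀ n, ‖c n‖ ≤ 1) {w : R} (hw : ‖w‖ < 1) : Summable fun n => ‖c n * w ^ n‖ :=
  (summable_geometric_of_lt_one (norm_nonneg w) hw).of_nonneg_of_le (fun _ => norm_nonneg _)
    fun n => (norm_mul_le _ _).trans <|
      (mul_le_mul (hc n) (norm_pow_le _ n) (norm_nonneg _) zero_le_one).trans_eq (one_mul _)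

theorem tsum_sechCoeff_mul_tsum {w : ℂ} (hw : ‖w‖ < 1) :
    (∑' n, (sechCoeff n : ℂ) * w ^ n) * ∑' n, ((2 * n)! : ℂ)⁻¹ * w ^ n = 1 := by
  have hsech : ∀ n, ‖(sechCoeff n : ℂ)‖ ≤ 1 := fun n => by
    simpa [Complex.norm_real] using abs_sechCoeff_le_one n
  have hfact : ∀ n, ‖((2 * n)! : ℂ)⁻¹‖ ≤ 1 := fun n => by
    simpa using inv_le_one_of_one_le₀ (mod_cast (2 * n).factorial_pos : (1 : ℝ) ≤ (2 * n)!)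
  rw [tsum_mul_tsum_eq_tsum_sum_antidiagonal_of_summable_norm (summable_norm_mul_pow hsech hw)
    (summable_norm_mul_pow hfact hw)]
  have hcoeff (M : ℕ) : ∑ p ∈ antidiagonal M,
      (sechCoeff p.1 : ℂ) * w ^ p.1 * (((2 * p.2)! : ℂ)⁻¹ * w ^ p.2) = if M = 0 then 1 else 0 := by
    have hsum : ∑ p ∈ antidiagonal M, (sechCoeff p.1 : ℂ) * w ^ p.1 * (((2 * p.2)! : ℂ)⁻¹ * w ^ p.2)
        = ((∑ p ∈ antidiagonal M, sechCoeff p.1 / (2 * p.2)! : ℝ) : ℂ) * w ^ M := by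
      push_cast
      rw [sum_mul]
      refine sum_congr rfl fun p hp => ?_
      rw [← (HasAntidiagonal.mem_antidiagonal.mp hp), pow_add]
      ring
    split_ifs with hM
    · subst hM; simp [sechCoeff_zero]
    · rw [hsum, sum_antidiagonal_sechCoeff_div_factorial hM, Complex.ofReal_zero, zero_mul]
  simp_rw [hcoeff]
  exact tsum_ite_eq 0 1

theorem hasSum_sechCoeff_of_norm_lt_one {z : ℂ} (hz : ‖z‖ < 1) :
    HasSum (fun n => (sechCoeff n : ℂ) * z ^ (2 * n)) (1 / Complex.cosh z) := by
  have hw : ‖z ^ 2‖ < 1 := by rw [norm_pow]; nlinarith [norm_nonneg z]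
  have hcosh : ∑' n, ((2 * n)! : ℂ)⁻¹ * (z ^ 2) ^ n = Complex.cosh z := by
    simp_rw [← pow_mul, inv_mul_eq_div]
    exact (Complex.hasSum_cosh z).tsum_eq
  have hsummable : Summable fun n => (sechCoeff n : ℂ) * (z ^ 2) ^ n :=
    (summable_norm_mul_pow (fun n => by simpa using abs_sechCoeff_le_one n) hw).of_norm
  simp_rw [pow_mul]
  rw [← eq_one_div_of_mul_eq_one_left (hcosh ▸ tsum_sechCoeff_mul_tsum hw)]
  exact hsummable.hasSum

theorem hasSum_extend_two_mul_mul_pow_iff {R : Type*} [Semiring R] [TopologicalSpace R]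
    {a : ℕ → R} {z s : R} :
    HasSum (fun m => Function.extend (2 * ·) a 0 m * z ^ m) s ↔
      HasSum (fun n => a n * z ^ (2 * n)) s := by
  have hinj : Function.Injective (2 * · : ℕ → ℕ) := mul_right_injective₀ two_ne_zero
  rw [← hinj.hasSum_iff fun m hm => by
    rw [Function.extend_apply' _ _ _ hm, Pi.zero_apply, zero_mul]]
  simp only [Function.comp_def, hinj.extend_apply]

theorem cosh_ne_zero_of_norm_lt {z : ℂ} (hz : ‖z‖ < Real.pi / 2) : Complex.cosh z ≠ 0 := by
  rw [← Complex.cos_mul_I, Complex.cos_ne_zero_iff]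
  rintro k hk
  have hnorm : ‖z * Complex.I‖ = |2 * (k : ℝ) + 1| * (Real.pi / 2) := by
    rw [hk, show (2 * (k : ℂ) + 1) * Real.pi / 2 = ((2 * k + 1 : ℝ) * (Real.pi / 2) : ℝ) by
      push_cast; ring, Complex.norm_real, Real.norm_eq_abs, abs_mul,
      abs_of_pos (by positivity : 0 < Real.pi / 2)]
  have hk1 : (1 : ℝ) ≤ |2 * (k : ℝ) + 1| := by
    exact_mod_cast Int.one_le_abs (by omega : 2 * k + 1 ≠ 0)
  rw [norm_mul, Complex.norm_I, mul_one] at hnorm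
  nlinarith [Real.pi_pos]

noncomputable def sechTaylorCoeff : ℕ → ℂ := Function.extend (2 * ·) (fun n => (sechCoeff n : ℂ)) 0

theorem norm_sechTaylorCoeff_le_one (m : ℕ) : ‖sechTaylorCoeff m‖ ≤ 1 := by
  by_cases hm : ∃ n, 2 * n = m
  · obtain ⟨n, rfl⟩ := hm
    rw [sechTaylorCoeff, (mul_right_injective₀ two_ne_zero).extend_apply]
    simpa using abs_sechCoeff_le_one n
  · simp [sechTaylorCoeff, Function.extend_apply' _ _ _ hm]

open FormalMultilinearSeries in
theorem hasFPowerSeriesOnBall_one_div_cosh_one :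
    HasFPowerSeriesOnBall (fun z => 1 / Complex.cosh z) (ofScalars ℂ sechTaylorCoeff) 0 1 := by
  refine ⟨?_, one_pos, fun {y} hy => ?_⟩
  · simpa using (ofScalars ℂ sechTaylorCoeff).le_radius_of_bound 1 (r := 1) fun n => by
      simpa [ofScalars_norm] using norm_sechTaylorCoeff_le_one n
  · simp only [zero_add, ofScalars_apply_eq, smul_eq_mul]
    exact hasSum_extend_two_mul_mul_pow_iff.mpr
      (hasSum_sechCoeff_of_norm_lt_one (by simpa [← ofReal_norm] using hy))

open FormalMultilinearSeries in
theorem hasSum_sechCoeff {z : ℂ} (hz : ‖z‖ < Real.pi / 2) :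
    HasSum (fun n => (sechCoeff n : ℂ) * z ^ (2 * n)) (1 / Complex.cosh z) := by
  obtain ⟨r, hzr, hrπ⟩ := exists_between hz
  lift r to NNReal using (norm_nonneg z).trans hzr.le
  have hdiff : DifferentiableOn ℂ (fun z => 1 / Complex.cosh z) (Metric.closedBall 0 r) :=
    (differentiableOn_const 1).div Complex.differentiable_cosh.differentiableOn fun w hw =>
      cosh_ne_zero_of_norm_lt ((mem_closedBall_zero_iff.mp hw).trans_lt hrπ)
  have hr : HasFPowerSeriesOnBall (fun z => 1 / Complex.cosh z) (ofScalars ℂ sechTaylorCoeff) 0 r :=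
    hasFPowerSeriesOnBall_one_div_cosh_one.exchange_radius
      (hdiff.hasFPowerSeriesOnBall (mod_cast (norm_nonneg z).trans_lt hzr))
  have hz' := hr.hasSum (y := z) (by simpa using hzr)
  simp only [zero_add, ofScalars_apply_eq, smul_eq_mul] at hz'
  exact hasSum_extend_two_mul_mul_pow_iff.mp hz'

theorem stmt_18 (x : ℝ) (hx : |x| < Real.pi / 2) :
    1 / Real.cosh x =
      ∑' n : ℕ, (-1) ^ n * (altCount (2 * n) : ℝ) * x ^ (2 * n) /
        Nat.factorial (2 * n) := by
  have hsum : HasSum (fun n => sechCoeff n * x ^ (2 * n)) (1 / Real.cosh x) := by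
    exact_mod_cast hasSum_sechCoeff (z := x) (by rwa [Complex.norm_real, Real.norm_eq_abs])
  rw [← hsum.tsum_eq]
  congr 1 with n
  rw [sechCoeff, div_mul_eq_mul_div]
end
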